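/- arXiv:2111.12630 — 6 statements merged into one kernel-verified Lean document; each statement's English description precedes it below -/
import Mathlib

section
/- Let n ≥ 3 and let α ∈ ℤⁿ be a real root of type Ã_{n−1}. Then there exist nonnegative integers m, a, b, c with a + b + c = n, a + c ≠ 0 and a + c ≠ n, such that α equals one of the four vectors (m^a, (m+1)^b, m^c), ((m+1)^a, m^b, (m+1)^c), −(m^a, (m+1)^b, m^c), or −((m+1)^a, m^b, (m+1)^c). -/
/-- The component number (in `{1, …, n}`) of a cyclic index `j : ZMod n`. -/
def compNo {n : ℕ} (j : ZMod n) : ℕ := if j.val = 0 then n else j.val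

/-- The `i`-th simple root (standard basis vector) of type `Ã_{n-1}`. -/
def stdRoot (n : ℕ) (i : ZMod n) : ZMod n → ℤ := fun j => if j = i then 1 else 0

/-- The `i`-th simple reflection: `(s_i v)_j = v_j` for `j ≠ i`, and
`(s_i v)_i = v_{i-1} + v_{i+1} - v_i` (indices mod `n`). -/
def simpleRefl (n : ℕ) (i : ZMod n) (v : ZMod n → ℤ) : ZMod n → ℤ :=
  fun j => if j = i then v (i - 1) + v (i + 1) - v i else v j

/-- Apply a list of simple reflections in order (head of the list applied first). -/
def applySeq (n : ℕ) (L : List (ZMod n)) (v : ZMod n → ℤ) : ZMod n → ℤ :=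
  L.foldl (fun w i => simpleRefl n i w) v

/-- Interpret a list of natural-number indices as cyclic indices mod `n`. -/
def natSeq (n : ℕ) (L : List ℕ) : List (ZMod n) := L.map (fun k => (k : ZMod n))

/-- A real root: a vector obtained from a simple root by a finite sequence of
simple reflections. -/
def IsRealRoot (n : ℕ) (v : ZMod n → ℤ) : Prop :=
  ∃ (L : List (ZMod n)) (k : ZMod n), v = applySeq n L (stdRoot n k)

/-- The vector whose first `a` components are `x`, next `b` components are `y`,
and remaining components are `z`. -/
def blockVec (n : ℕ) (x y z : ℤ) (a b : ℕ) : ZMod n → ℤ :=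
  fun j => if compNo j ≤ a then x else if compNo j ≤ a + b then y else z

/-- The all-ones vector `𝟙`. -/
def onesVec (n : ℕ) : ZMod n → ℤ := fun _ => 1

/-- The block of reflections `s_{d+1}, …, s_{n-1}; s_n, s_{n-1}, …, s_1; s_2, …, s_d`
(in order of application). -/
def blockW (n d : ℕ) : List ℕ :=
  List.range' (d+1) (n - 1 - d) ++ (List.range' 1 n).reverse ++ List.range' 2 (d - 1)

/-- The block of reflections `s_1, …, s_{a+b}; s_{a+b-1}, …, s_1; s_{a+b+1}, …, s_n;
s_{n-1}, …, s_{a+b+1}` (in order of application), with `d = a + b`. -/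
def blockW2 (n d : ℕ) : List ℕ :=
  List.range' 1 d ++ (List.range' 1 (d-1)).reverse ++ List.range' (d+1) (n - d) ++
    (List.range' (d+1) (n - 1 - d)).reverse

namespace Ahelp

variable {n : ℕ} [NeZero n]

lemma val_inj {a b : ZMod n} (h : a.val = b.val) : a = b := ZMod.val_injective n h

lemma val_add_one (hn : 2 ≤ n) (x : ZMod n) :
    (x + 1).val = if x.val = n - 1 then 0 else x.val + 1 := by
  have hx : x.val < n := ZMod.val_lt x
  by_cases h : x.val = n - 1
  · rw [if_pos h]
    have hx1 : x = ((n - 1 : ℕ) : ZMod n) := by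
      apply val_inj; rw [ZMod.val_cast_of_lt (by omega)]; exact h
    rw [hx1]
    have : ((n - 1 : ℕ) : ZMod n) + 1 = ((n : ℕ) : ZMod n) := by
      rw [← Nat.cast_add_one]; congr 1; omega
    rw [this, ZMod.natCast_self, ZMod.val_zero]
  · rw [if_neg h]
    have : x + 1 = ((x.val + 1 : ℕ) : ZMod n) := by
      rw [Nat.cast_add_one, ZMod.natCast_zmod_val]
    rw [this, ZMod.val_cast_of_lt (by omega)]

lemma val_sub_one (hn : 2 ≤ n) (x : ZMod n) :
    (x - 1).val = if x.val = 0 then n - 1 else x.val - 1 := by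
  have h := val_add_one hn (x - 1)
  rw [sub_add_cancel] at h
  have hx : x.val < n := ZMod.val_lt x
  have hx1 : (x - 1).val < n := ZMod.val_lt (x - 1)
  by_cases h0 : (x - 1).val = n - 1
  · rw [if_pos h0] at h; rw [h0]; simp [h]
  · rw [if_neg h0] at h
    split_ifs with h1 <;> omega

lemma L1 (hn : 2 ≤ n) (a b : ZMod n) :
    ((a + 1) - b).val = if (a - b).val = n - 1 then 0 else (a - b).val + 1 := by
  have : a + 1 - b = (a - b) + 1 := by ring
  rw [this, val_add_one hn]

lemma L2 (hn : 2 ≤ n) (a b : ZMod n) :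
    ((a - 1) - b).val = if (a - b).val = 0 then n - 1 else (a - b).val - 1 := by
  have : a - 1 - b = (a - b) - 1 := by ring
  rw [this, val_sub_one hn]

lemma L3 (hn : 2 ≤ n) (a b : ZMod n) :
    (a - (b + 1)).val = if (a - b).val = 0 then n - 1 else (a - b).val - 1 := by
  have : a - (b + 1) = (a - b) - 1 := by ring
  rw [this, val_sub_one hn]

lemma L4 (hn : 2 ≤ n) (a b : ZMod n) :
    (a - (b - 1)).val = if (a - b).val = n - 1 then 0 else (a - b).val + 1 := by
  have : a - (b - 1) = (a - b) + 1 := by ring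
  rw [this, val_add_one hn]

omit [NeZero n] in
lemma L5 {a b : ZMod n} : (a - b).val = 0 ↔ a = b := by
  rw [ZMod.val_eq_zero, sub_eq_zero]

lemma L6 {a b c : ZMod n} (h : (a - c).val = (b - c).val) : a = b :=
  sub_left_inj.mp (val_inj h)

/-- shape invariant: `v = c·𝟙 + χ_I` for a nonempty proper cyclic interval `I`. -/
def Good (n : ℕ) (v : ZMod n → ℤ) : Prop :=
  ∃ (c : ℤ) (p : ZMod n) (len : ℕ), 1 ≤ len ∧ len ≤ n - 1 ∧
    ∀ j, v j = c + if (j - p).val < len then 1 else 0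

lemma good_refl (hn3 : 3 ≤ n) (i : ZMod n) (v : ZMod n → ℤ) (h : Good n v) :
    Good n (simpleRefl n i v) := by
  have hn : 2 ≤ n := by omega
  obtain ⟨c, p, len, h1, h2, hv⟩ := h
  have htn : (i - p).val < n := ZMod.val_lt _
  set t := (i - p).val with ht
  have him : (i - 1 - p).val = if t = 0 then n - 1 else t - 1 := L2 hn i p
  have hip : (i + 1 - p).val = if t = n - 1 then 0 else t + 1 := L1 hn i p
  by_cases hti : t < len
  · by_cases hl1 : len = 1
    -- case 1a : I = {i} shrinks to complement with constant c-1
    · refine ⟨c - 1, p + 1, n - 1, by omega, by omega, fun j => ?_⟩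
      have hδn : (j - p).val < n := ZMod.val_lt _
      have hL3 : (j - (p + 1)).val
          = if (j - p).val = 0 then n - 1 else (j - p).val - 1 := L3 hn j p
      by_cases hji : j = i
      · subst hji
        simp only [simpleRefl, if_pos rfl]
        rw [hv, hv, hv, him, hip, ← ht, hL3, ← ht]
        split_ifs <;> omega
      · have hδ : (j - p).val ≠ t := fun hh => hji (L6 (hh.trans ht))
        simp only [simpleRefl, if_neg hji]
        rw [hv j, hL3]
        split_ifs <;> omega
    · by_cases ht0 : t = 0
      -- case 1b : shrink from the left
      · refine ⟨c, p + 1, len - 1, by omega, by omega, fun j => ?_⟩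
        have hδn : (j - p).val < n := ZMod.val_lt _
        have hL3 : (j - (p + 1)).val
            = if (j - p).val = 0 then n - 1 else (j - p).val - 1 := L3 hn j p
        by_cases hji : j = i
        · subst hji
          simp only [simpleRefl, if_pos rfl]
          rw [hv, hv, hv, him, hip, ← ht, hL3, ← ht]
          split_ifs <;> omega
        · have hδ : (j - p).val ≠ t := fun hh => hji (L6 (hh.trans ht))
          simp only [simpleRefl, if_neg hji]
          rw [hv j, hL3]
          split_ifs <;> omega
      · by_cases htl : t = len - 1
        -- case 1c : shrink from the right
        · refine ⟨c, p, len - 1, by omega, by omega, fun j => ?_⟩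
          have hδn : (j - p).val < n := ZMod.val_lt _
          by_cases hji : j = i
          · subst hji
            simp only [simpleRefl, if_pos rfl]
            rw [hv, hv, hv, him, hip, ← ht]
            split_ifs <;> omega
          · have hδ : (j - p).val ≠ t := fun hh => hji (L6 (hh.trans ht))
            simp only [simpleRefl, if_neg hji]
            rw [hv j]
            split_ifs <;> omega
        -- case 1d : interior, unchanged
        · refine ⟨c, p, len, by omega, by omega, fun j => ?_⟩
          have hδn : (j - p).val < n := ZMod.val_lt _
          by_cases hji : j = i
          · subst hji
            simp only [simpleRefl, if_pos rfl]
            rw [hv, hv, hv, him, hip, ← ht]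
            split_ifs <;> omega
          · simp only [simpleRefl, if_neg hji]
            exact hv j
  · by_cases hlm : len = n - 1
    -- case 2a : complement of {i}, grows to (c+1)·𝟙 + χ_{i}
    · refine ⟨c + 1, i, 1, by omega, by omega, fun j => ?_⟩
      have hδn : (j - p).val < n := ZMod.val_lt _
      by_cases hji : j = i
      · subst hji
        simp only [simpleRefl, if_pos rfl]
        rw [hv, hv, hv, him, hip, ← ht, sub_self, ZMod.val_zero]
        split_ifs <;> omega
      · have hδ : (j - p).val ≠ t := fun hh => hji (L6 (hh.trans ht))
        have hji' : (j - i).val ≠ 0 := fun hh => hji (L5.mp hh)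
        simp only [simpleRefl, if_neg hji]
        rw [hv j]
        split_ifs <;> omega
    · by_cases htn1 : t = n - 1
      -- case 2b : grow on the left, new start i = p - 1
      · have hii : i = p - 1 := by
          have hv1 : ((0 : ZMod n) - 1).val = n - 1 := by
            rw [val_sub_one hn, if_pos ZMod.val_zero]
          have : (i - p).val = (p - 1 - p).val := by
            rw [L2 hn p p, sub_self, ZMod.val_zero, if_pos rfl, ← ht, htn1]
          exact L6 this
        refine ⟨c, i, len + 1, by omega, by omega, fun j => ?_⟩
        have hδn : (j - p).val < n := ZMod.val_lt _
        have hL4 : (j - (p - 1)).val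
            = if (j - p).val = n - 1 then 0 else (j - p).val + 1 := L4 hn j p
        by_cases hji : j = i
        · subst hji
          simp only [simpleRefl, if_pos rfl]
          rw [hv, hv, hv, him, hip, ← ht, sub_self, ZMod.val_zero]
          split_ifs <;> omega
        · have hδ : (j - p).val ≠ t := fun hh => hji (L6 (hh.trans ht))
          simp only [simpleRefl, if_neg hji]
          rw [hv j, hii, hL4]
          split_ifs <;> omega
      · by_cases htl : t = len
        -- case 2c : grow on the right
        · refine ⟨c, p, len + 1, by omega, by omega, fun j => ?_⟩
          have hδn : (j - p).val < n := ZMod.val_lt _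
          by_cases hji : j = i
          · subst hji
            simp only [simpleRefl, if_pos rfl]
            rw [hv, hv, hv, him, hip, ← ht]
            split_ifs <;> omega
          · have hδ : (j - p).val ≠ t := fun hh => hji (L6 (hh.trans ht))
            simp only [simpleRefl, if_neg hji]
            rw [hv j]
            split_ifs <;> omega
        -- case 2d : exterior, unchanged
        · refine ⟨c, p, len, by omega, by omega, fun j => ?_⟩
          by_cases hji : j = i
          · subst hji
            simp only [simpleRefl, if_pos rfl]
            rw [hv, hv, hv, him, hip, ← ht]
            split_ifs <;> omega
          · simp only [simpleRefl, if_neg hji]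
            exact hv j

lemma val_sub'' (x y : ZMod n) :
    (x - y).val = if x.val < y.val then x.val + n - y.val else x.val - y.val := by
  have hx : x.val < n := ZMod.val_lt x
  have hy : y.val < n := ZMod.val_lt y
  by_cases h : x.val < y.val
  · rw [if_pos h]
    have e1 : ((x.val + n - y.val : ℕ) : ZMod n) = x - y := by
      rw [Nat.cast_sub (by omega), Nat.cast_add, ZMod.natCast_self,
        ZMod.natCast_zmod_val, ZMod.natCast_zmod_val]
      ring
    rw [← e1, ZMod.val_cast_of_lt (by omega)]
  · rw [if_neg h]
    have e2 : ((x.val - y.val : ℕ) : ZMod n) = x - y := by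
      rw [Nat.cast_sub (by omega), ZMod.natCast_zmod_val, ZMod.natCast_zmod_val]
    rw [← e2, ZMod.val_cast_of_lt (by omega)]

lemma compNo_eq (hn : 2 ≤ n) (j : ZMod n) : compNo j = (j - 1).val + 1 := by
  have hj : j.val < n := ZMod.val_lt j
  unfold compNo
  rw [val_sub_one hn]
  split_ifs with h0 <;> omega

omit [NeZero n] in
lemma good_std (hn3 : 3 ≤ n) (k : ZMod n) : Good n (stdRoot n k) := by
  refine ⟨0, k, 1, le_refl 1, by omega, fun j => ?_⟩
  unfold stdRoot
  by_cases h : j = k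
  · rw [if_pos h, if_pos (by rw [h, sub_self, ZMod.val_zero]; omega)]; ring
  · rw [if_neg h, if_neg (by intro hc; exact h (L5.mp (by omega)))]; ring

lemma good_applySeq (hn3 : 3 ≤ n) (L : List (ZMod n)) (v : ZMod n → ℤ) (h : Good n v) :
    Good n (applySeq n L v) := by
  induction L generalizing v with
  | nil => exact h
  | cons i L ih => exact ih _ (good_refl hn3 i v h)

lemma good_implies (hn3 : 3 ≤ n) (v : ZMod n → ℤ) (h : Good n v) :
    ∃ m a b c : ℕ, a + b + c = n ∧ a + c ≠ 0 ∧ a + c ≠ n ∧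
      (v = blockVec n (m : ℤ) ((m : ℤ) + 1) (m : ℤ) a b ∨
       v = blockVec n ((m : ℤ) + 1) (m : ℤ) ((m : ℤ) + 1) a b ∨
       v = -blockVec n (m : ℤ) ((m : ℤ) + 1) (m : ℤ) a b ∨
       v = -blockVec n ((m : ℤ) + 1) (m : ℤ) ((m : ℤ) + 1) a b) := by
  have hn : 2 ≤ n := by omega
  obtain ⟨c, p, len, h1, h2, hv⟩ := h
  have hu : (p - 1).val < n := ZMod.val_lt _
  set u := (p - 1).val with hud
  have key : ∀ j : ZMod n, (j - p).val
      = if (j - 1).val < u then (j - 1).val + n - u else (j - 1).val - u := by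
    intro j
    rw [show j - p = (j - 1) - (p - 1) by ring, val_sub'']
  by_cases hA : u + len ≤ n
  · -- non-wrapping interval
    by_cases hc : 0 ≤ c
    · refine ⟨c.toNat, u, len, n - u - len, by omega, by omega, by omega, Or.inl ?_⟩
      have hm : ((c.toNat : ℕ) : ℤ) = c := Int.toNat_of_nonneg hc
      funext j
      have hw : (j - 1).val < n := ZMod.val_lt _
      simp only [blockVec]
      rw [hv j, compNo_eq hn, key j]
      split_ifs <;> omega
    · refine ⟨(-c - 1).toNat, u, len, n - u - len, by omega, by omega, by omega,
        Or.inr (Or.inr (Or.inr ?_))⟩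
      have hm : (((-c - 1).toNat : ℕ) : ℤ) = -c - 1 := Int.toNat_of_nonneg (by omega)
      funext j
      have hw : (j - 1).val < n := ZMod.val_lt _
      simp only [blockVec, Pi.neg_apply]
      rw [hv j, compNo_eq hn, key j]
      split_ifs <;> omega
  · -- wrapping interval
    by_cases hc : 0 ≤ c
    · refine ⟨c.toNat, u + len - n, n - len, n - u, by omega, by omega, by omega,
        Or.inr (Or.inl ?_)⟩
      have hm : ((c.toNat : ℕ) : ℤ) = c := Int.toNat_of_nonneg hc
      funext j
      have hw : (j - 1).val < n := ZMod.val_lt _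
      simp only [blockVec]
      rw [hv j, compNo_eq hn, key j]
      split_ifs <;> omega
    · refine ⟨(-c - 1).toNat, u + len - n, n - len, n - u, by omega, by omega, by omega,
        Or.inr (Or.inr (Or.inl ?_))⟩
      have hm : (((-c - 1).toNat : ℕ) : ℤ) = -c - 1 := Int.toNat_of_nonneg (by omega)
      funext j
      have hw : (j - 1).val < n := ZMod.val_lt _
      simp only [blockVec, Pi.neg_apply]
      rw [hv j, compNo_eq hn, key j]
      split_ifs <;> omega

end Ahelp

theorem statement1 (n : ℕ) (hn : 3 ≤ n) (v : ZMod n → ℤ) (hv : IsRealRoot n v) :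
    ∃ m a b c : ℕ, a + b + c = n ∧ a + c ≠ 0 ∧ a + c ≠ n ∧
      (v = blockVec n (m : ℤ) ((m : ℤ) + 1) (m : ℤ) a b ∨
       v = blockVec n ((m : ℤ) + 1) (m : ℤ) ((m : ℤ) + 1) a b ∨
       v = -blockVec n (m : ℤ) ((m : ℤ) + 1) (m : ℤ) a b ∨
       v = -blockVec n ((m : ℤ) + 1) (m : ℤ) ((m : ℤ) + 1) a b) := by
  haveI : NeZero n := ⟨by omega⟩
  obtain ⟨L, k, rfl⟩ := hv
  exact Ahelp.good_implies hn _ (Ahelp.good_applySeq hn L _ (Ahelp.good_std hn k))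
end

section
/- Let n ≥ 3 and let Δ ⊆ ℤⁿ be the set of all vectors of the form (m^a, (m+1)^b, m^c), ((m+1)^a, m^b, (m+1)^c), −(m^a, (m+1)^b, m^c), or −((m+1)^a, m^b, (m+1)^c), where m, a, b, c range over nonnegative integers with a + b + c = n, a + c ≠ 0 and a + c ≠ n. Then Δ is invariant under every simple reflection: for every i ∈ {1, …, n} and every v ∈ Δ, s_i(v) ∈ Δ. -/
def GoodDiff (n : ℕ) (v : ZMod n → ℤ) : Prop :=
  ∃ q r : ZMod n, q ≠ r ∧ ∀ j, v (j + 1) - v j =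
    (if j = q then 1 else 0) - (if j = r then 1 else 0)

lemma goodDiff_neg {n : ℕ} {v : ZMod n → ℤ} (h : GoodDiff n v) : GoodDiff n (-v) := by
  obtain ⟨q, r, hqr, h⟩ := h
  refine ⟨r, q, hqr.symm, fun j => ?_⟩
  have := h j
  simp only [Pi.neg_apply]
  split_ifs at this ⊢ <;> omega

lemma goodDiff_simpleRefl {n : ℕ} (hn : 3 ≤ n) (i : ZMod n) {v : ZMod n → ℤ}
    (h : GoodDiff n v) : GoodDiff n (simpleRefl n i v) := by
  haveI : NeZero n := ⟨by omega⟩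
  haveI : Fact (1 < n) := ⟨by omega⟩
  have h10 : (1 : ZMod n) ≠ 0 := one_ne_zero
  have hii : i - 1 ≠ i := fun hcon => h10 (sub_eq_self.mp hcon)
  have hi1 : i + 1 ≠ i := fun hc => h10 (by linear_combination hc)
  have hsub : i - 1 + 1 = i := by ring
  set τ : ZMod n → ZMod n := fun j => if j = i - 1 then i else if j = i then i - 1 else j with hτ
  have t1 : τ (i - 1) = i := by simp [hτ]
  have t2 : τ i = i - 1 := by simp [hτ, Ne.symm hii]
  have t3 : ∀ j, j ≠ i - 1 → j ≠ i → τ j = j := by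
    intro j h1 h2; simp only [hτ]; rw [if_neg h1, if_neg h2]
  have hττ : ∀ j, τ (τ j) = j := by
    intro j
    by_cases h1 : j = i - 1
    · rw [h1, t1, t2]
    · by_cases h2 : j = i
      · rw [h2, t2, t1]
      · rw [t3 j h1 h2, t3 j h1 h2]
  have hstep : ∀ j, simpleRefl n i v (j + 1) - simpleRefl n i v j
      = v (τ j + 1) - v (τ j) := by
    intro j
    by_cases h1 : j = i - 1
    · rw [h1, t1, hsub]
      simp only [simpleRefl, eq_self_iff_true, if_true, if_neg hii]
      ring
    · by_cases h2 : j = i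
      · rw [h2, t2, hsub]
        simp only [simpleRefl, eq_self_iff_true, if_true, if_neg hi1]
        ring
      · have hj1 : j + 1 ≠ i := fun hc => h1 (by rw [← hc]; ring)
        rw [t3 j h1 h2]
        simp only [simpleRefl]
        rw [if_neg hj1, if_neg h2]
  obtain ⟨q, r, hqr, hd⟩ := h
  refine ⟨τ q, τ r, fun hc => hqr (by rw [← hττ q, hc, hττ]), fun j => ?_⟩
  have e1 : (τ j = q) ↔ (j = τ q) := ⟨fun h => by rw [← h, hττ], fun h => by rw [h, hττ]⟩
  have e2 : (τ j = r) ↔ (j = τ r) := ⟨fun h => by rw [← h, hττ], fun h => by rw [h, hττ]⟩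
  rw [hstep j, hd (τ j), if_congr e1 rfl rfl, if_congr e2 rfl rfl]

set_option maxHeartbeats 1600000 in
lemma goodDiff_block1 {n : ℕ} (hn : 3 ≤ n) (t : ℤ) (a b : ℕ) (hb : 1 ≤ b) (hbn : b < n)
    (hab : a + b ≤ n) : GoodDiff n (blockVec n t (t + 1) t a b) := by
  haveI : NeZero n := ⟨by omega⟩
  refine ⟨(a : ZMod n), ((a + b : ℕ) : ZMod n), ?_, fun j => ?_⟩
  · intro hc
    have h0 := congrArg ZMod.val hc
    rw [ZMod.val_natCast, ZMod.val_natCast] at h0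
    have h1 : a % n = a := Nat.mod_eq_of_lt (by omega)
    rcases Nat.lt_or_ge (a + b) n with h | h
    · rw [Nat.mod_eq_of_lt h] at h0; omega
    · have : a + b = n := by omega
      rw [this, Nat.mod_self] at h0; omega
  · have hjv : j.val < n := ZMod.val_lt j
    have hj1 : (j + 1).val = (j.val + 1) % n := by
      conv_lhs => rw [← ZMod.natCast_zmod_val j]
      rw [show ((j.val : ZMod n) + 1) = ((j.val + 1 : ℕ) : ZMod n) by push_cast; ring,
        ZMod.val_natCast]
    have hm1 : (j.val + 1) % n = if j.val + 1 = n then 0 else j.val + 1 := by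
      split
      · simp [*]
      · exact Nat.mod_eq_of_lt (by omega)
    have hq : (j = ((a : ℕ) : ZMod n)) ↔ j.val = a % n := by
      constructor
      · intro h; rw [h, ZMod.val_natCast]
      · intro h; rw [← ZMod.natCast_zmod_val j, h, ZMod.natCast_mod]
    have hr : (j = ((a + b : ℕ) : ZMod n)) ↔ j.val = (a + b) % n := by
      constructor
      · intro h; rw [h, ZMod.val_natCast]
      · intro h; rw [← ZMod.natCast_zmod_val j, h, ZMod.natCast_mod]
    have ha : a % n = a := Nat.mod_eq_of_lt (by omega)
    have hab2 : (a + b) % n = if a + b = n then 0 else a + b := by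
      split
      · simp [*]
      · exact Nat.mod_eq_of_lt (by omega)
    rw [if_congr hq rfl rfl, if_congr hr rfl rfl]
    simp only [blockVec, compNo, hj1, hm1, ha, hab2]
    split_ifs <;> first | contradiction | omega

set_option maxHeartbeats 1600000 in
lemma goodDiff_block2 {n : ℕ} (hn : 3 ≤ n) (t : ℤ) (a b : ℕ) (hb : 1 ≤ b) (hbn : b < n)
    (hab : a + b ≤ n) : GoodDiff n (blockVec n (t + 1) t (t + 1) a b) := by
  haveI : NeZero n := ⟨by omega⟩
  refine ⟨((a + b : ℕ) : ZMod n), (a : ZMod n), ?_, fun j => ?_⟩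
  · intro hc
    have h0 := congrArg ZMod.val hc
    rw [ZMod.val_natCast, ZMod.val_natCast] at h0
    have h1 : a % n = a := Nat.mod_eq_of_lt (by omega)
    rcases Nat.lt_or_ge (a + b) n with h | h
    · rw [Nat.mod_eq_of_lt h] at h0; omega
    · have : a + b = n := by omega
      rw [this, Nat.mod_self] at h0; omega
  · have hjv : j.val < n := ZMod.val_lt j
    have hj1 : (j + 1).val = (j.val + 1) % n := by
      conv_lhs => rw [← ZMod.natCast_zmod_val j]
      rw [show ((j.val : ZMod n) + 1) = ((j.val + 1 : ℕ) : ZMod n) by push_cast; ring,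
        ZMod.val_natCast]
    have hm1 : (j.val + 1) % n = if j.val + 1 = n then 0 else j.val + 1 := by
      split
      · simp [*]
      · exact Nat.mod_eq_of_lt (by omega)
    have hq : (j = ((a : ℕ) : ZMod n)) ↔ j.val = a % n := by
      constructor
      · intro h; rw [h, ZMod.val_natCast]
      · intro h; rw [← ZMod.natCast_zmod_val j, h, ZMod.natCast_mod]
    have hr : (j = ((a + b : ℕ) : ZMod n)) ↔ j.val = (a + b) % n := by
      constructor
      · intro h; rw [h, ZMod.val_natCast]
      · intro h; rw [← ZMod.natCast_zmod_val j, h, ZMod.natCast_mod]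
    have ha : a % n = a := Nat.mod_eq_of_lt (by omega)
    have hab2 : (a + b) % n = if a + b = n then 0 else a + b := by
      split
      · simp [*]
      · exact Nat.mod_eq_of_lt (by omega)
    rw [if_congr hr rfl rfl, if_congr hq rfl rfl]
    simp only [blockVec, compNo, hj1, hm1, ha, hab2]
    split_ifs <;> first | contradiction | omega

lemma recon {n : ℕ} (hn : 3 ≤ n) {v : ZMod n → ℤ} {q r : ZMod n}
    (hd : ∀ j, v (j + 1) - v j = (if j = q then 1 else 0) - (if j = r then 1 else 0)) :
    ∀ j : ZMod n, v j = v 0 + (if q.val < j.val then 1 else 0)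
      - (if r.val < j.val then 1 else 0) := by
  haveI : NeZero n := ⟨by omega⟩
  have key : ∀ k : ℕ, k < n → v (k : ZMod n) = v 0 + (if q.val < k then 1 else 0)
      - (if r.val < k then 1 else 0) := by
    intro k
    induction k with
    | zero => intro _; simp
    | succ k ih =>
      intro hk
      have hk' : k < n := by omega
      have e : ((k + 1 : ℕ) : ZMod n) = (k : ZMod n) + 1 := by push_cast; ring
      have hd' := hd (k : ZMod n)
      have hkv : ((k : ℕ) : ZMod n).val = k := ZMod.val_cast_of_lt hk'
      have hq : ((k : ZMod n) = q) ↔ k = q.val := by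
        constructor
        · intro h; rw [← hkv, h]
        · intro h; rw [h, ZMod.natCast_zmod_val]
      have hr : ((k : ZMod n) = r) ↔ k = r.val := by
        constructor
        · intro h; rw [← hkv, h]
        · intro h; rw [h, ZMod.natCast_zmod_val]
      rw [if_congr hq rfl rfl, if_congr hr rfl rfl] at hd'
      have hvk := ih hk'
      rw [e]
      split_ifs at hd' hvk ⊢ <;> omega
  intro j
  have := key j.val (ZMod.val_lt j)
  rwa [ZMod.natCast_zmod_val] at this

lemma goodDiff_to_P {n : ℕ} (hn : 3 ≤ n) {v : ZMod n → ℤ} (h : GoodDiff n v) :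
    ∃ m a b c : ℕ, a + b + c = n ∧ a + c ≠ 0 ∧ a + c ≠ n ∧
      (v = blockVec n (m : ℤ) ((m : ℤ) + 1) (m : ℤ) a b ∨
       v = blockVec n ((m : ℤ) + 1) (m : ℤ) ((m : ℤ) + 1) a b ∨
       v = -blockVec n (m : ℤ) ((m : ℤ) + 1) (m : ℤ) a b ∨
       v = -blockVec n ((m : ℤ) + 1) (m : ℤ) ((m : ℤ) + 1) a b) := by
  haveI : NeZero n := ⟨by omega⟩
  obtain ⟨q, r, hqr, hd⟩ := h
  have hrec := recon hn hd
  have hq : q.val < n := ZMod.val_lt q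
  have hr : r.val < n := ZMod.val_lt r
  have hne : q.val ≠ r.val := fun hc => hqr (ZMod.val_injective n hc)
  rcases lt_or_gt_of_ne hne with hlt | hlt
  · rcases le_or_gt 0 (v 0) with hts | hts
    · refine ⟨(v 0).toNat, q.val, r.val - q.val, n - r.val, by omega, by omega, by omega,
        Or.inl ?_⟩
      have htn : (((v 0).toNat : ℕ) : ℤ) = v 0 := Int.toNat_of_nonneg hts
      funext j
      have hj := hrec j
      have hjv : j.val < n := ZMod.val_lt j
      simp only [blockVec, compNo, htn]
      split_ifs at hj ⊢ <;> omega
    · refine ⟨(-(v 0) - 1).toNat, q.val, r.val - q.val, n - r.val, by omega, by omega, by omega,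
        Or.inr (Or.inr (Or.inr ?_))⟩
      have htn : ((((-(v 0)) - 1).toNat : ℕ) : ℤ) = -(v 0) - 1 := Int.toNat_of_nonneg (by omega)
      funext j
      have hj := hrec j
      have hjv : j.val < n := ZMod.val_lt j
      simp only [Pi.neg_apply, blockVec, compNo, htn]
      split_ifs at hj ⊢ <;> omega
  · rcases le_or_gt 1 (v 0) with hts | hts
    · refine ⟨((v 0) - 1).toNat, r.val, q.val - r.val, n - q.val, by omega, by omega, by omega,
        Or.inr (Or.inl ?_)⟩
      have htn : ((((v 0) - 1).toNat : ℕ) : ℤ) = v 0 - 1 := Int.toNat_of_nonneg (by omega)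
      funext j
      have hj := hrec j
      have hjv : j.val < n := ZMod.val_lt j
      simp only [blockVec, compNo, htn]
      split_ifs at hj ⊢ <;> omega
    · refine ⟨(-(v 0)).toNat, r.val, q.val - r.val, n - q.val, by omega, by omega, by omega,
        Or.inr (Or.inr (Or.inl ?_))⟩
      have htn : (((-(v 0)).toNat : ℕ) : ℤ) = -(v 0) := Int.toNat_of_nonneg (by omega)
      funext j
      have hj := hrec j
      have hjv : j.val < n := ZMod.val_lt j
      simp only [Pi.neg_apply, blockVec, compNo, htn]
      split_ifs at hj ⊢ <;> omega

theorem statement2 (n : ℕ) (hn : 3 ≤ n) (i : ZMod n) (v : ZMod n → ℤ)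
    (hv : ∃ m a b c : ℕ, a + b + c = n ∧ a + c ≠ 0 ∧ a + c ≠ n ∧
      (v = blockVec n (m : ℤ) ((m : ℤ) + 1) (m : ℤ) a b ∨
       v = blockVec n ((m : ℤ) + 1) (m : ℤ) ((m : ℤ) + 1) a b ∨
       v = -blockVec n (m : ℤ) ((m : ℤ) + 1) (m : ℤ) a b ∨
       v = -blockVec n ((m : ℤ) + 1) (m : ℤ) ((m : ℤ) + 1) a b)) :
    ∃ m a b c : ℕ, a + b + c = n ∧ a + c ≠ 0 ∧ a + c ≠ n ∧
      (simpleRefl n i v = blockVec n (m : ℤ) ((m : ℤ) + 1) (m : ℤ) a b ∨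
       simpleRefl n i v = blockVec n ((m : ℤ) + 1) (m : ℤ) ((m : ℤ) + 1) a b ∨
       simpleRefl n i v = -blockVec n (m : ℤ) ((m : ℤ) + 1) (m : ℤ) a b ∨
       simpleRefl n i v = -blockVec n ((m : ℤ) + 1) (m : ℤ) ((m : ℤ) + 1) a b) := by
  have hgood : GoodDiff n v := by
    obtain ⟨m, a, b, c, habc, hac0, hacn, hforms⟩ := hv
    have hb : 1 ≤ b := by omega
    have hbn : b < n := by omega
    have hab : a + b ≤ n := by omega
    rcases hforms with h | h | h | h
    · rw [h]; exact goodDiff_block1 hn (m : ℤ) a b hb hbn hab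
    · rw [h]; exact goodDiff_block2 hn (m : ℤ) a b hb hbn hab
    · rw [h]; exact goodDiff_neg (goodDiff_block1 hn (m : ℤ) a b hb hbn hab)
    · rw [h]; exact goodDiff_neg (goodDiff_block2 hn (m : ℤ) a b hb hbn hab)
  exact goodDiff_to_P hn (goodDiff_simpleRefl hn i hgood)
end

section
/- Let n ≥ 3, let d be an integer with 2 ≤ d ≤ n − 1, and let m ≥ 0. Let W denote the composite of simple reflections obtained by applying, in order: s_{d+1}, s_{d+2}, …, s_{n−1}; then s_n, s_{n−1}, …, s_1; then s_2, s_3, …, s_d. Applying the block W to the simple root α_d a total of m times in succession yields the vector m·𝟙 + α_d. -/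
/-!
Every simple reflection commutes with adding a constant vector `c • 𝟙` (the new entry
`(v_{i-1} + c) + (v_{i+1} + c) - (v_i + c)` is shifted by `c` too), so it suffices to show
`W α_d = 𝟙 + α_d`. Follow the vector through `W` as the indicator of a cyclic interval:
`s_{d+1}, …, s_n` grow `[d, d]` to `[d, n]`; `s_{n-1}, …, s_{d+1}` act inside it and fix it;
`s_d` shrinks it to `[d+1, n]`; `s_{d-1}, …, s_2` act away from it and fix it;
`s_1, …, s_{d-1}` grow it to `[d+1, d-1]`, the indicator of everything but `d`, i.e. `𝟙 - α_d`;
finally `s_d (𝟙 - α_d) = 𝟙 + α_d`.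
-/

open Function

section Reflections
variable {n : ℕ}

theorem simpleRefl_eq_update (i : ZMod n) (v : ZMod n → ℤ) :
    simpleRefl n i v = update v i (v (i - 1) + v (i + 1) - v i) := by
  funext j
  simp only [simpleRefl, update_apply]

theorem simpleRefl_zsmul_onesVec_add (i : ZMod n) (c : ℤ) (v : ZMod n → ℤ) :
    simpleRefl n i (c • onesVec n + v) = c • onesVec n + simpleRefl n i v := by
  funext j
  simp only [simpleRefl, Pi.add_apply, Pi.smul_apply, onesVec, smul_eq_mul]
  split_ifs <;> ring

theorem applySeq_cons (i : ZMod n) (L : List (ZMod n)) (v : ZMod n → ℤ) :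
    applySeq n (i :: L) v = applySeq n L (simpleRefl n i v) := rfl

theorem applySeq_zsmul_onesVec_add (L : List (ZMod n)) (c : ℤ) (v : ZMod n → ℤ) :
    applySeq n L (c • onesVec n + v) = c • onesVec n + applySeq n L v := by
  induction L generalizing v with
  | nil => rfl
  | cons i L ih => rw [applySeq_cons, applySeq_cons, simpleRefl_zsmul_onesVec_add, ih]

theorem applySeq_eq_self {L : List (ZMod n)} {v : ZMod n → ℤ}
    (h : ∀ i ∈ L, simpleRefl n i v = v) : applySeq n L v = v := by
  induction L with
  | nil => rfl
  | cons i L ih =>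
    rw [applySeq_cons, h i List.mem_cons_self, ih fun j hj => h j (List.mem_cons_of_mem i hj)]

theorem applySeq_natSeq_append (L₁ L₂ : List ℕ) (v : ZMod n → ℤ) :
    applySeq n (natSeq n (L₁ ++ L₂)) v =
      applySeq n (natSeq n L₂) (applySeq n (natSeq n L₁) v) := by
  simp [applySeq, natSeq]

theorem mem_natSeq {i : ZMod n} {L : List ℕ} : i ∈ natSeq n L ↔ ∃ a ∈ L, (a : ZMod n) = i := by
  simp [natSeq, eq_comm]

theorem applySeq_natSeq_cons (a : ℕ) (L : List ℕ) (v : ZMod n → ℤ) :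
    applySeq n (natSeq n (a :: L)) v = applySeq n (natSeq n L) (simpleRefl n a v) := rfl

theorem applySeq_natSeq_singleton (i : ℕ) (v : ZMod n → ℤ) :
    applySeq n (natSeq n [i]) v = simpleRefl n i v := rfl

theorem simpleRefl_update_onesVec (p : ZMod n) (h1 : (1 : ZMod n) ≠ 0) :
    simpleRefl n p (update (onesVec n) p 0) = onesVec n + stdRoot n p := by
  have hprev : p - 1 ≠ p := by simpa [sub_eq_self] using h1
  have hnext : p + 1 ≠ p := by simpa [add_eq_left] using h1
  funext j
  simp only [simpleRefl, update_apply, hprev, hnext, if_true, if_false, onesVec, stdRoot,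
    Pi.add_apply]
  split_ifs <;> norm_num

end Reflections

section Arc
variable {n : ℕ}

/-- The indicator vector of the cyclic interval `p, p + 1, …, p + k - 1`. -/
def arc (p : ZMod n) (k : ℕ) : ZMod n → ℤ := fun j => if (j - p).val < k then 1 else 0

theorem add_natCast_inj {p : ZMod n} {s t : ℕ} (hs : s < n) (ht : t < n) :
    p + s = p + t ↔ s = t := by
  rw [add_right_inj, ZMod.natCast_eq_natCast_iff', Nat.mod_eq_of_lt hs, Nat.mod_eq_of_lt ht]

theorem arc_add_natCast (p : ZMod n) (k : ℕ) {t : ℕ} (ht : t < n) :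
    arc p k (p + t) = if t < k then 1 else 0 := by
  simp only [arc, add_sub_cancel_left, ZMod.val_cast_of_lt ht]

theorem arc_one (p : ZMod n) : arc p 1 = stdRoot n p := by
  funext j
  simp only [arc, stdRoot, Nat.lt_one_iff, ZMod.val_eq_zero, sub_eq_zero]

theorem simpleRefl_arc_eq_self (p : ZMod n) (k : ℕ) {t : ℕ} (ht : 1 ≤ t) (htn : t + 1 < n)
    (hk : t ≠ k) (hk' : t + 1 ≠ k) :
    simpleRefl n (p + t) (arc p k) = arc p k := by
  have hprev : p + t - 1 = p + ((t - 1 : ℕ) : ZMod n) := by push_cast [Nat.cast_sub ht]; ring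
  have hnext : p + t + 1 = p + ((t + 1 : ℕ) : ZMod n) := by push_cast; ring
  rw [simpleRefl_eq_update, hprev, hnext, arc_add_natCast p k (by omega),
    arc_add_natCast p k (by omega), arc_add_natCast p k (by omega)]
  conv_rhs => rw [← update_eq_self (p + t) (arc p k), arc_add_natCast p k (by omega)]
  congr 1
  split_ifs <;> omega

theorem applySeq_natSeq_arc_eq_self (p : ZMod n) (k : ℕ) (L : List ℕ)
    (h : ∀ b ∈ L, ∃ t : ℕ, (b : ZMod n) = p + t ∧ 1 ≤ t ∧ t + 1 < n ∧ t ≠ k ∧ t + 1 ≠ k) :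
    applySeq n (natSeq n L) (arc p k) = arc p k := by
  refine applySeq_eq_self fun i hi => ?_
  obtain ⟨b, hb, rfl⟩ := mem_natSeq.mp hi
  obtain ⟨t, hbt, ht, htn, hk, hk'⟩ := h b hb
  rw [hbt, simpleRefl_arc_eq_self p k ht htn hk hk']

variable [NeZero n]

theorem exists_eq_add_natCast (p j : ZMod n) : ∃ t < n, j = p + t :=
  ⟨(j - p).val, ZMod.val_lt _, by rw [ZMod.natCast_zmod_val]; ring⟩

theorem natCast_pred_eq_neg_one : ((n - 1 : ℕ) : ZMod n) = -1 := by
  rw [Nat.cast_pred (NeZero.pos n), ZMod.natCast_self, zero_sub]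

theorem arc_succ (p : ZMod n) {k : ℕ} (hk : k < n) :
    arc p (k + 1) = update (arc p k) (p + k) 1 := by
  funext j
  obtain ⟨t, ht, rfl⟩ := exists_eq_add_natCast p j
  simp only [update_apply, add_natCast_inj ht hk, arc_add_natCast p _ ht]
  split_ifs <;> omega

theorem arc_add_one (p : ZMod n) {k : ℕ} (hk : k < n) :
    arc (p + 1) k = update (arc p (k + 1)) p 0 := by
  funext j
  obtain ⟨t, ht, rfl⟩ := exists_eq_add_natCast p j
  rcases t with _ | s
  · have h := arc_add_natCast (p + 1) k (t := n - 1) (by omega)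
    rw [natCast_pred_eq_neg_one, add_neg_cancel_right] at h
    rw [Nat.cast_zero, add_zero, update_self, h, if_neg (by omega)]
  · have hne := (add_natCast_inj (p := p) ht (NeZero.pos n)).not.mpr s.succ_ne_zero
    rw [Nat.cast_zero, add_zero] at hne
    have h := arc_add_natCast (p + 1) k (t := s) (by omega)
    rw [show p + 1 + (s : ZMod n) = p + ((s + 1 : ℕ) : ZMod n) by push_cast; ring] at h
    rw [update_apply, if_neg hne, h, arc_add_natCast p _ ht]
    split_ifs <;> omega

theorem simpleRefl_arc_extend (p : ZMod n) {k : ℕ} (hk : 1 ≤ k) (hkn : k + 1 < n) :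
    simpleRefl n (p + k) (arc p k) = arc p (k + 1) := by
  have hprev : p + k - 1 = p + ((k - 1 : ℕ) : ZMod n) := by push_cast [Nat.cast_sub hk]; ring
  have hnext : p + k + 1 = p + ((k + 1 : ℕ) : ZMod n) := by push_cast; ring
  rw [simpleRefl_eq_update, arc_succ p (by omega), hprev, hnext, arc_add_natCast p k (by omega),
    arc_add_natCast p k (by omega), arc_add_natCast p k (by omega)]
  congr 1
  split_ifs <;> omega

theorem simpleRefl_arc_shrink (p : ZMod n) {k : ℕ} (hk : 1 ≤ k) (hkn : k + 1 < n) :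
    simpleRefl n p (arc p (k + 1)) = arc (p + 1) k := by
  have hprev : p - 1 = p + ((n - 1 : ℕ) : ZMod n) := by rw [natCast_pred_eq_neg_one]; ring
  have hnext : p + 1 = p + ((1 : ℕ) : ZMod n) := by push_cast; ring
  have hself := arc_add_natCast p (k + 1) (NeZero.pos n)
  rw [Nat.cast_zero, add_zero] at hself
  rw [simpleRefl_eq_update, arc_add_one p (by omega), hprev, hnext, hself,
    arc_add_natCast p _ (by omega), arc_add_natCast p _ (by omega)]
  congr 1
  split_ifs <;> omega

theorem arc_eq_onesVec (p : ZMod n) : arc p n = onesVec n := by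
  funext j
  simp only [arc, onesVec, ZMod.val_lt, if_true]

theorem applySeq_natSeq_range'_arc (p : ZMod n) {s k : ℕ} (r : ℕ) (hs : (s : ZMod n) = p + k)
    (hk : 1 ≤ k) (hkr : k + r < n) :
    applySeq n (natSeq n (List.range' s r)) (arc p k) = arc p (r + k) := by
  induction r generalizing s k with
  | zero => simp [natSeq, applySeq]
  | succ r ih =>
    rw [List.range'_succ, applySeq_natSeq_cons, hs, simpleRefl_arc_extend p hk (by omega),
      ih (by push_cast; rw [hs]; ring) (by omega) (by omega), Nat.add_right_comm, Nat.add_assoc]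

end Arc

theorem List.range'_eq_append_cons (s m r : ℕ) :
    List.range' s (m + 1 + r) = List.range' s m ++ (s + m) :: List.range' (s + m + 1) r := by
  rw [← List.range'_append_1, List.range'_1_concat, List.append_assoc, List.singleton_append,
    Nat.add_assoc]

theorem blockW_eq (a c : ℕ) :
    blockW (a + c + 3) (a + 2) =
      List.range' (a + 3) (c + 1) ++ (List.range' (a + 3) c).reverse ++ [a + 2] ++
        (List.range' 2 a).reverse ++ List.range' 1 (a + 1) ++ [a + 2] := by
  rw [blockW, show a + c + 3 - 1 - (a + 2) = c by omega, show a + 2 - 1 = a + 1 by omega,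
    show a + c + 3 = a + 1 + 1 + (c + 1) by omega, List.range'_eq_append_cons,
    show 1 + (a + 1) = a + 2 by omega, show a + 2 + 1 = a + 3 by omega,
    List.range'_1_concat (s := a + 3) (n := c), List.range'_1_concat (s := 2) (n := a),
    List.range'_succ (s := 1) (n := a)]
  simp only [List.reverse_append, List.reverse_cons, List.reverse_nil, List.append_assoc,
    List.cons_append, List.nil_append, Nat.add_comm 2 a]

theorem applySeq_blockW_stdRoot {n d : ℕ} (hd : 2 ≤ d) (hdn : d < n) :
    applySeq n (natSeq n (blockW n d)) (stdRoot n d) = onesVec n + stdRoot n d := by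
  obtain ⟨a, rfl⟩ : ∃ a, d = a + 2 := ⟨d - 2, by omega⟩
  obtain ⟨c, rfl⟩ : ∃ c, n = a + c + 3 := ⟨n - a - 3, by omega⟩
  have : Fact (1 < a + c + 3) := ⟨by omega⟩
  set p : ZMod (a + c + 3) := ((a + 2 : ℕ) : ZMod (a + c + 3))
  have hn : ((a + c + 3 : ℕ) : ZMod (a + c + 3)) = 0 := ZMod.natCast_self _
  push_cast at hn
  have hinterior : applySeq _ (natSeq _ (List.range' (a + 3) c).reverse) (arc p (c + 1 + 1)) =
      arc p (c + 1 + 1) := by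
    refine applySeq_natSeq_arc_eq_self _ _ _ fun b hb => ⟨b - (a + 2), ?_, ?_⟩
    · simp only [List.mem_reverse, List.mem_range'_1] at hb
      simp only [p]; push_cast [Nat.cast_sub (show a + 2 ≤ b by omega)]; ring
    · simp only [List.mem_reverse, List.mem_range'_1] at hb
      omega
  have hexterior : applySeq _ (natSeq _ (List.range' 2 a).reverse) (arc (p + 1) (c + 1)) =
      arc (p + 1) (c + 1) := by
    refine applySeq_natSeq_arc_eq_self _ _ _ fun b hb => ⟨c + b, ?_, ?_⟩
    · simp only [p]; push_cast; linear_combination -hn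
    · simp only [List.mem_reverse, List.mem_range'_1] at hb
      omega
  rw [blockW_eq]
  simp only [applySeq_natSeq_append, applySeq_natSeq_singleton]
  conv_lhs => rw [← arc_one]
  rw [applySeq_natSeq_range'_arc p (c + 1) (by simp only [p]; push_cast; ring) le_rfl (by omega),
    hinterior, simpleRefl_arc_shrink p (by omega) (by omega), hexterior,
    applySeq_natSeq_range'_arc (p + 1) (a + 1) (by simp only [p]; push_cast; linear_combination -hn)
      (by omega) (by omega)]
  rw [arc_add_one p (by omega), show a + 1 + (c + 1) + 1 = a + c + 3 by omega, arc_eq_onesVec,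
    simpleRefl_update_onesVec p one_ne_zero]

theorem iterate_apply_eq_zsmul_add {M : Type*} [AddCommGroup M] {F : M → M} {e x : M}
    (hF : ∀ (c : ℤ) v, F (c • e + v) = c • e + F v) (hx : F x = e + x) (m : ℕ) :
    F^[m] x = (m : ℤ) • e + x := by
  induction m with
  | zero => simp
  | succ m ih =>
    rw [iterate_succ_apply', ih, hF, hx, Nat.cast_succ, add_smul, one_smul]
    abel

theorem statement7_general (n : ℕ) (d : ℕ) (hd1 : 2 ≤ d) (hd2 : d ≤ n - 1) (m : ℕ) :
    (fun v => applySeq n (natSeq n (blockW n d)) v)^[m] (stdRoot n (d : ZMod n)) =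
      (m : ℤ) • onesVec n + stdRoot n (d : ZMod n) :=
  iterate_apply_eq_zsmul_add (fun c v => applySeq_zsmul_onesVec_add _ c v)
    (applySeq_blockW_stdRoot hd1 (by omega)) m

theorem statement7 (n : ℕ) (hn : 3 ≤ n) (d : ℕ) (hd1 : 2 ≤ d) (hd2 : d ≤ n - 1) (m : ℕ) :
    (fun v => applySeq n (natSeq n (blockW n d)) v)^[m] (stdRoot n (d : ZMod n)) =
      (m : ℤ) • onesVec n + stdRoot n (d : ZMod n) :=
  statement7_general n d hd1 hd2 m
end

section
/- Let n ≥ 3 and let m, a, b, c be integers with m ≥ 0, a ≥ 1, b ≥ 1, c ≥ 1 and a + b + c = n; set d = a + b. Starting from the simple root α_d, apply m times in succession the block of simple reflections consisting of, in order: s_{d+1}, s_{d+2}, …, s_{n−1}; then s_n, s_{n−1}, …, s_1; then s_2, s_3, …, s_d; and finally apply, in order, s_{d−1}, s_{d−2}, …, s_{a+1} (the empty sequence if b = 1). The resulting vector is (m^a, (m+1)^b, m^c). In particular, (m^a, (m+1)^b, m^c) is a positive real root. -/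
section basics
variable {n : ℕ}

lemma compNo_pos (hn : 0 < n) (j : ZMod n) : 1 ≤ compNo j := by
  unfold compNo; split <;> omega

lemma compNo_le (hn : 0 < n) (j : ZMod n) : compNo j ≤ n := by
  have : NeZero n := ⟨hn.ne'⟩
  have := ZMod.val_lt j
  unfold compNo; split <;> omega

lemma compNo_cast (hn : 0 < n) {k : ℕ} (h1 : 1 ≤ k) (h2 : k ≤ n) :
    compNo ((k : ZMod n)) = k := by
  unfold compNo
  rcases eq_or_lt_of_le h2 with rfl | h
  · rw [ZMod.natCast_self]; simp
  · rw [ZMod.val_natCast_of_lt h, if_neg (by omega)]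

lemma compNo_eq_iff (hn : 0 < n) {k : ℕ} (h1 : 1 ≤ k) (h2 : k ≤ n) (j : ZMod n) :
    j = (k : ZMod n) ↔ compNo j = k := by
  have : NeZero n := ⟨hn.ne'⟩
  constructor
  · rintro rfl; exact compNo_cast hn h1 h2
  · intro h
    unfold compNo at h
    split at h
    · rename_i h0
      have hj : j = 0 := by rwa [ZMod.val_eq_zero] at h0
      rw [hj, ← h, ZMod.natCast_self]
    · rw [← h]; exact (ZMod.natCast_rightInverse j).symm

lemma compNo_sub_one (hn : 0 < n) {k : ℕ} (h1 : 1 ≤ k) (h2 : k ≤ n) :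
    compNo ((k : ZMod n) - 1) = if k = 1 then n else k - 1 := by
  split
  · rename_i h; subst h
    have : ((1 : ℕ) : ZMod n) - 1 = 0 := by push_cast; ring
    rw [this]
    unfold compNo
    rw [if_pos ZMod.val_zero]
  · rename_i h
    have : ((k : ZMod n) - 1) = ((k - 1 : ℕ) : ZMod n) := by
      push_cast [Nat.cast_sub h1]; ring
    rw [this, compNo_cast hn (by omega) (by omega)]

lemma compNo_add_one (hn : 0 < n) {k : ℕ} (h1 : 1 ≤ k) (h2 : k ≤ n) :
    compNo ((k : ZMod n) + 1) = if k = n then 1 else k + 1 := by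
  split
  · rename_i h
    rw [h, ZMod.natCast_self, zero_add]
    have : ((1 : ℕ) : ZMod n) = 1 := by push_cast; ring
    rw [← this, compNo_cast hn le_rfl (by omega)]
  · rename_i h
    have : ((k : ZMod n) + 1) = ((k + 1 : ℕ) : ZMod n) := by push_cast; ring
    rw [this, compNo_cast hn (by omega) (by omega)]

lemma simpleRefl_eval (hn : 0 < n) {k : ℕ} (h1 : 1 ≤ k) (h2 : k ≤ n)
    (v : ZMod n → ℤ) (f : ℕ → ℤ) (hv : ∀ j, v j = f (compNo j)) (j : ZMod n) :
    simpleRefl n (k : ZMod n) v j =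
      if compNo j = k then
        f (if k = 1 then n else k - 1) + f (if k = n then 1 else k + 1) - f k
      else f (compNo j) := by
  unfold simpleRefl
  rw [if_congr (compNo_eq_iff hn h1 h2 j) rfl rfl]
  split
  · rw [hv, hv, hv, compNo_sub_one hn h1 h2, compNo_add_one hn h1 h2, compNo_cast hn h1 h2]
  · rw [hv]
end basics

section seq
variable {n : ℕ}

lemma applySeq_nil (v : ZMod n → ℤ) : applySeq n (natSeq n []) v = v := rfl

lemma applySeq_append (L1 L2 : List ℕ) (v : ZMod n → ℤ) :
    applySeq n (natSeq n (L1 ++ L2)) v = applySeq n (natSeq n L2) (applySeq n (natSeq n L1) v) := by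
  simp [applySeq, natSeq, List.foldl_append]

lemma applySeq_snoc (L : List ℕ) (k : ℕ) (v : ZMod n → ℤ) :
    applySeq n (natSeq n (L ++ [k])) v = simpleRefl n (k : ZMod n) (applySeq n (natSeq n L) v) := by
  rw [applySeq_append]; rfl

lemma applySeq_singleton (k : ℕ) (v : ZMod n → ℤ) :
    applySeq n (natSeq n [k]) v = simpleRefl n (k : ZMod n) v := rfl

lemma applySeq_fix (L : List ℕ) (v : ZMod n → ℤ)
    (h : ∀ k ∈ L, simpleRefl n (k : ZMod n) v = v) :
    applySeq n (natSeq n L) v = v := by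
  induction L with
  | nil => rfl
  | cons a L ih =>
      have : applySeq n (natSeq n (a :: L)) v = applySeq n (natSeq n L) (simpleRefl n (a : ZMod n) v) := rfl
      rw [this, h a (by simp)]
      exact ih (fun k hk => h k (by simp [hk]))

lemma applySeq_const_add (L : List (ZMod n)) (s : ℤ) (v : ZMod n → ℤ) :
    applySeq n L (fun j => s + v j) = fun j => s + applySeq n L v j := by
  induction L generalizing v with
  | nil => rfl
  | cons a L ih =>
      show applySeq n L (simpleRefl n a fun j => s + v j) = _
      have : simpleRefl n a (fun j => s + v j) = fun j => s + simpleRefl n a v j := by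
        funext j; unfold simpleRefl; split <;> ring
      rw [this, ih]
      rfl

lemma applySeq_join_replicate (m : ℕ) (W : List ℕ) (v : ZMod n → ℤ) :
    applySeq n (natSeq n (List.replicate m W).flatten) v
      = (fun w => applySeq n (natSeq n W) w)^[m] v := by
  induction m generalizing v with
  | zero => rfl
  | succ m ih =>
      rw [List.replicate_succ]
      simp only [List.flatten_cons]
      rw [applySeq_append, ih, Function.iterate_succ_apply]
end seq

section phases
variable {n : ℕ}

lemma range'_split (s a b : ℕ) :
    List.range' s a ++ List.range' (s + a) b = List.range' s (a + b) := by
  simpa [Nat.add_comm] using List.range'_append s a b 1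

lemma phase1 (hn : 3 ≤ n) {d : ℕ} (hd2 : 2 ≤ d) (t : ℕ) (hdt : d + t ≤ n - 1) :
    ∀ j : ZMod n, applySeq n (natSeq n (List.range' (d+1) t)) (stdRoot n (d : ZMod n)) j
      = if d ≤ compNo j ∧ compNo j ≤ d + t then 1 else 0 := by
  induction t with
  | zero =>
      intro j
      rw [List.range'_zero, applySeq_nil]
      unfold stdRoot
      rw [if_congr (compNo_eq_iff (by omega) (by omega) (by omega) j) rfl rfl]
      split_ifs <;> omega
  | succ t ih =>
      intro j
      rw [List.range'_concat, applySeq_snoc,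
        simpleRefl_eval (by omega) (k := d+1+1*t) (by omega) (by omega) _
          (fun c => if d ≤ c ∧ c ≤ d + t then 1 else 0) (ih (by omega))]
      have hc1 := compNo_pos (n := n) (by omega) j
      have hc2 := compNo_le (n := n) (by omega) j
      split_ifs <;> omega

lemma phase3 (hn : 3 ≤ n) {d : ℕ} (hd2 : 2 ≤ d) (hdn : d ≤ n - 1) (t : ℕ) (ht : t ≤ d - 2)
    (v : ZMod n → ℤ) (hv : ∀ j, v j = if compNo j = 1 ∨ d + 1 ≤ compNo j then 1 else 0) :
    ∀ j : ZMod n, applySeq n (natSeq n (List.range' 2 t)) v j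
      = if compNo j ≤ t + 1 ∨ d + 1 ≤ compNo j then 1 else 0 := by
  induction t with
  | zero =>
      intro j
      rw [List.range'_zero, applySeq_nil, hv]
      have hc1 := compNo_pos (n := n) (by omega) j
      split_ifs <;> omega
  | succ t ih =>
      intro j
      rw [List.range'_concat, applySeq_snoc,
        simpleRefl_eval (by omega) (k := 2+1*t) (by omega) (by omega) _
          (fun c => if c ≤ t + 1 ∨ d + 1 ≤ c then 1 else 0) (ih (by omega))]
      have hc1 := compNo_pos (n := n) (by omega) j
      have hc2 := compNo_le (n := n) (by omega) j
      split_ifs <;> omega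

lemma phase4 (hn : 3 ≤ n) {d : ℕ} (hd2 : 2 ≤ d) (hdn : d ≤ n - 1) (t : ℕ) (ht : t ≤ d - 2)
    (v : ZMod n → ℤ) (hv : ∀ j, v j = if compNo j = d then 1 else 0) :
    ∀ j : ZMod n, applySeq n (natSeq n (List.range' (d - t) t).reverse) v j
      = if d - t ≤ compNo j ∧ compNo j ≤ d then 1 else 0 := by
  induction t with
  | zero =>
      intro j
      rw [List.range'_zero, List.reverse_nil, applySeq_nil, hv]
      split_ifs <;> omega
  | succ t ih =>
      intro j
      have e1 : List.range' (d - (t+1)) (t+1) = (d - (t+1)) :: List.range' (d - t) t := by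
        rw [List.range'_succ, (by omega : d - (t+1) + 1 = d - t)]
      rw [e1, List.reverse_cons, applySeq_snoc,
        simpleRefl_eval (by omega) (k := d - (t+1)) (by omega) (by omega) _
          (fun c => if d - t ≤ c ∧ c ≤ d then 1 else 0) (ih (by omega))]
      have hc1 := compNo_pos (n := n) (by omega) j
      have hc2 := compNo_le (n := n) (by omega) j
      split_ifs <;> omega

end phases

section phase2
variable {n : ℕ}

set_option maxHeartbeats 2000000 in
lemma phase2 (hn : 3 ≤ n) {d : ℕ} (hd2 : 2 ≤ d) (hdn : d ≤ n - 1) (t : ℕ) (ht : t ≤ n)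
    (v : ZMod n → ℤ)
    (hv : ∀ j, v j = if d ≤ compNo j ∧ compNo j ≤ n - 1 then 1 else 0) :
    ∀ j : ZMod n, applySeq n (natSeq n (List.range' (n - t + 1) t).reverse) v j
      = (if t = 0 then (if d ≤ compNo j ∧ compNo j ≤ n - 1 then (1:ℤ) else 0)
         else if t ≤ n - d then (if d ≤ compNo j then 1 else 0)
         else if t ≤ n - 1 then (if d + 1 ≤ compNo j then 1 else 0)
         else (if compNo j = 1 ∨ d + 1 ≤ compNo j then 1 else 0)) := by
  induction t with
  | zero =>
      intro j
      rw [List.range'_zero, List.reverse_nil, applySeq_nil, hv]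
      simp
  | succ t ih =>
      intro j
      have e1 : List.range' (n - (t+1) + 1) (t+1) = (n - t) :: List.range' (n - t + 1) t := by
        rw [(by omega : n - (t+1) + 1 = n - t), List.range'_succ]
      rw [e1, List.reverse_cons, applySeq_snoc,
        simpleRefl_eval (by omega) (k := n - t) (by omega) (by omega) _
          (fun c => (if t = 0 then (if d ≤ c ∧ c ≤ n - 1 then (1:ℤ) else 0)
            else if t ≤ n - d then (if d ≤ c then 1 else 0)
            else if t ≤ n - 1 then (if d + 1 ≤ c then 1 else 0)
            else (if c = 1 ∨ d + 1 ≤ c then 1 else 0))) (ih (by omega))]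
      have hc1 := compNo_pos (n := n) (by omega) j
      have hc2 := compNo_le (n := n) (by omega) j
      split_ifs <;> first | omega | exact ‹False›.elim

set_option maxHeartbeats 2000000 in
lemma blockW_apply (hn : 3 ≤ n) {d : ℕ} (hd2 : 2 ≤ d) (hdn : d ≤ n - 1) :
    ∀ j : ZMod n, applySeq n (natSeq n (blockW n d)) (stdRoot n (d : ZMod n)) j
      = if compNo j = d then 2 else 1 := by
  intro j
  unfold blockW
  rw [applySeq_append, applySeq_append]
  -- state after phase 1 and the full descending sweep
  have h0 := phase1 hn hd2 (n - 1 - d) (by omega)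
  have e2 : (List.range' 1 n).reverse = (List.range' (n - n + 1) n).reverse := by
    rw [(by omega : n - n + 1 = 1)]
  rw [e2]
  have h2 := phase2 hn hd2 hdn n le_rfl
      (applySeq n (natSeq n (List.range' (d+1) (n - 1 - d))) (stdRoot n ((d : ℕ) : ZMod n)))
      (fun j => by rw [h0 j]; split_ifs <;> omega)
  -- state after the second block: indicator of {c = 1} ∪ {c ≥ d+1}
  have h2' : ∀ j : ZMod n,
      applySeq n (natSeq n (List.range' (n - n + 1) n).reverse)
        (applySeq n (natSeq n (List.range' (d+1) (n - 1 - d))) (stdRoot n (d : ZMod n))) j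
      = if compNo j = 1 ∨ d + 1 ≤ compNo j then 1 else 0 := by
    intro j
    rw [h2 j]
    have hc1 := compNo_pos (n := n) (by omega) j
    split_ifs <;> omega
  -- phase 3
  have e3 : List.range' 2 (d - 1) = List.range' 2 (d - 2) ++ [2 + 1 * (d - 2)] := by
    rw [← List.range'_concat, (by omega : d - 2 + 1 = d - 1)]
  rw [e3, applySeq_snoc]
  have h3 := phase3 hn hd2 hdn (d - 2) le_rfl _ h2'
  rw [simpleRefl_eval (by omega) (k := 2 + 1 * (d - 2)) (by omega) (by omega) _
      (fun c => if c ≤ (d - 2) + 1 ∨ d + 1 ≤ c then (1:ℤ) else 0) h3]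
  have hc1 := compNo_pos (n := n) (by omega) j
  have hc2 := compNo_le (n := n) (by omega) j
  split_ifs <;> omega

end phase2

section main
variable {n : ℕ}

lemma stdRoot_eval (hn : 3 ≤ n) {d : ℕ} (hd1 : 1 ≤ d) (hdn : d ≤ n) (j : ZMod n) :
    stdRoot n ((d : ℕ) : ZMod n) j = if compNo j = d then 1 else 0 := by
  unfold stdRoot
  rw [if_congr (compNo_eq_iff (by omega) hd1 hdn j) rfl rfl]

lemma iter_blockW (hn : 3 ≤ n) {d : ℕ} (hd2 : 2 ≤ d) (hdn : d ≤ n - 1) (m : ℕ) :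
    (fun v => applySeq n (natSeq n (blockW n d)) v)^[m] (stdRoot n ((d : ℕ) : ZMod n))
      = fun j => (m : ℤ) + stdRoot n ((d : ℕ) : ZMod n) j := by
  induction m with
  | zero => funext j; simp
  | succ m ih =>
      rw [Function.iterate_succ_apply', ih]
      show applySeq n (natSeq n (blockW n d)) (fun j => (m : ℤ) + stdRoot n ((d:ℕ) : ZMod n) j) = _
      rw [applySeq_const_add]
      funext j
      rw [blockW_apply hn hd2 hdn j, stdRoot_eval hn (by omega) (by omega) j]
      push_cast
      split_ifs <;> ring


theorem statement8 (n : ℕ) (hn : 3 ≤ n) (m a b c : ℕ)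
    (ha : 1 ≤ a) (hb : 1 ≤ b) (hc : 1 ≤ c) (habc : a + b + c = n) :
    (applySeq n (natSeq n ((List.range' (a + 1) (b - 1)).reverse))
        ((fun v => applySeq n (natSeq n (blockW n (a + b))) v)^[m]
          (stdRoot n ((a + b : ℕ) : ZMod n)))
      = blockVec n (m : ℤ) ((m : ℤ) + 1) (m : ℤ) a b) ∧
    IsRealRoot n (blockVec n (m : ℤ) ((m : ℤ) + 1) (m : ℤ) a b) ∧
    (∀ j, 0 ≤ blockVec n (m : ℤ) ((m : ℤ) + 1) (m : ℤ) a b j) := by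
  have hd2 : 2 ≤ a + b := by omega
  have hdn : a + b ≤ n - 1 := by omega
  have h1 : applySeq n (natSeq n ((List.range' (a + 1) (b - 1)).reverse))
        ((fun v => applySeq n (natSeq n (blockW n (a + b))) v)^[m]
          (stdRoot n ((a + b : ℕ) : ZMod n)))
      = blockVec n (m : ℤ) ((m : ℤ) + 1) (m : ℤ) a b := by
    rw [iter_blockW hn hd2 hdn m, applySeq_const_add]
    funext j
    have e1 : List.range' (a + 1) (b - 1) = List.range' ((a + b) - (b - 1)) (b - 1) := by
      rw [(by omega : (a + b) - (b - 1) = a + 1)]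
    rw [e1]
    have h4 := phase4 hn hd2 hdn (b - 1) (by omega) (stdRoot n ((a + b : ℕ) : ZMod n))
        (fun j => stdRoot_eval hn (by omega) (by omega) j) j
    rw [h4]
    unfold blockVec
    have hc1 := compNo_pos (n := n) (by omega) j
    split_ifs <;> omega
  refine ⟨h1, ⟨natSeq n ((List.replicate m (blockW n (a + b))).flatten
      ++ (List.range' (a + 1) (b - 1)).reverse), ((a + b : ℕ) : ZMod n), ?_⟩,
    fun j => by unfold blockVec; split_ifs <;> positivity⟩
  have : natSeq n ((List.replicate m (blockW n (a + b))).flatten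
      ++ (List.range' (a + 1) (b - 1)).reverse)
      = natSeq n (List.replicate m (blockW n (a + b))).flatten
        ++ natSeq n ((List.range' (a + 1) (b - 1)).reverse) := by
    simp [natSeq]
  rw [this]
  show _ = applySeq n _ (stdRoot n _)
  rw [← h1]
  unfold applySeq
  rw [List.foldl_append]
  congr 1
  exact (applySeq_join_replicate m (blockW n (a + b)) (stdRoot n ((a + b : ℕ) : ZMod n))).symm
end main
end

section
/- Let n ≥ 3, let a, b, c be integers with a ≥ 1, b ≥ 1, c ≥ 1 and a + b + c = n, and let m ≥ 0. Applying to the vector ((m+1)^a, m^b, (m+1)^c), in order, the simple reflections s_1, s_2, …, s_{a+b}; then s_{a+b−1}, s_{a+b−2}, …, s_1; then s_{a+b+1}, s_{a+b+2}, …, s_n; then s_{n−1}, s_{n−2}, …, s_{a+b+1}, yields the vector ((m+2)^a, (m+1)^b, (m+2)^c). -/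
/-!
The word `blockW2 n (a + b)` is `s_p ⋯ s_q ⋯ s_p` for `[p, q] = [1, a + b]`, followed by the same
word for `[p, q] = [a + b + 1, n]`. Such a word acts as the reflection in the real root
`β = α_p + ⋯ + α_q`: it subtracts `⟨v, β^∨⟩ = v_p + v_q - v_{p-1} - v_{q+1}` (a telescoped sum of
simple pairings) from the coordinates `p, …, q`. On `((m+1)^a, m^b, (m+1)^c)` this pairing is `-1`
for both intervals in turn, so the two reflections add `1` on `[1, a + b]` and then on
`[a + b + 1, n]`, that is, they add `𝟙`.
-/

/- Vectors are transported along `compNo` to functions `ℕ → ℤ`, of which only the values at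
`1, …, n` matter; index arithmetic then becomes linear arithmetic over `ℕ`. -/

def cycPred (n k : ℕ) : ℕ := if k = 1 then n else k - 1

def cycSucc (n k : ℕ) : ℕ := if k = n then 1 else k + 1

def simpleReflNat (n k : ℕ) (g : ℕ → ℤ) : ℕ → ℤ :=
  Function.update g k (g (cycPred n k) + g (cycSucc n k) - g k)

def applySeqNat (n : ℕ) (L : List ℕ) (g : ℕ → ℤ) : ℕ → ℤ :=
  L.foldl (fun h k => simpleReflNat n k h) g

theorem applySeqNat_append (n : ℕ) (L₁ L₂ : List ℕ) (g : ℕ → ℤ) :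
    applySeqNat n (L₁ ++ L₂) g = applySeqNat n L₂ (applySeqNat n L₁ g) :=
  List.foldl_append

section CompNo

variable {n : ℕ}

theorem compNo_mem_Icc [NeZero n] (j : ZMod n) : compNo j ∈ Set.Icc 1 n := by
  have := ZMod.val_lt j
  have := NeZero.pos n
  unfold compNo
  split_ifs <;> simp only [Set.mem_Icc] <;> omega

theorem compNo_natCast {k : ℕ} (h1 : 1 ≤ k) (h2 : k ≤ n) : compNo (k : ZMod n) = k := by
  unfold compNo
  rcases h2.eq_or_lt with rfl | h
  · simp
  · rw [ZMod.val_natCast_of_lt h, if_neg (by omega)]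

theorem natCast_compNo [NeZero n] (j : ZMod n) : (compNo j : ZMod n) = j := by
  unfold compNo
  split_ifs with h
  · rw [ZMod.natCast_self, eq_comm, ← ZMod.val_eq_zero, h]
  · exact ZMod.natCast_zmod_val j

theorem compNo_natCast_sub_one {k : ℕ} (h1 : 1 ≤ k) (h2 : k ≤ n) :
    compNo ((k : ZMod n) - 1) = cycPred n k := by
  unfold cycPred
  split_ifs with h
  · subst h
    rw [Nat.cast_one, sub_self, ← ZMod.natCast_self, compNo_natCast h2 le_rfl]
  · rw [← Nat.cast_one, ← Nat.cast_sub h1, compNo_natCast (by omega) (by omega)]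

theorem compNo_natCast_add_one {k : ℕ} (h1 : 1 ≤ k) (h2 : k ≤ n) :
    compNo ((k : ZMod n) + 1) = cycSucc n k := by
  unfold cycSucc
  split_ifs with h
  · subst h
    rw [ZMod.natCast_self, zero_add, ← Nat.cast_one, compNo_natCast le_rfl h1]
  · rw [← Nat.cast_succ, compNo_natCast (by omega) (by omega)]

theorem simpleRefl_comp_compNo [NeZero n] {k : ℕ} (h1 : 1 ≤ k) (h2 : k ≤ n) (g : ℕ → ℤ) :
    simpleRefl n k (g ∘ compNo) = simpleReflNat n k g ∘ compNo := by
  funext j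
  simp only [simpleRefl, simpleReflNat, Function.comp_apply, Function.update_apply]
  by_cases hj : j = k
  · subst hj
    rw [if_pos rfl, if_pos (compNo_natCast h1 h2), compNo_natCast_sub_one h1 h2,
      compNo_natCast_add_one h1 h2, compNo_natCast h1 h2]
  · rw [if_neg hj, if_neg fun hc => hj (by rw [← hc, natCast_compNo])]

theorem applySeq_natSeq_comp_compNo [NeZero n] (L : List ℕ) (hL : ∀ k ∈ L, 1 ≤ k ∧ k ≤ n)
    (g : ℕ → ℤ) :
    applySeq n (natSeq n L) (g ∘ compNo) = applySeqNat n L g ∘ compNo := by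
  induction L generalizing g with
  | nil => rfl
  | cons k L ih =>
    obtain ⟨h1, h2⟩ := hL k List.mem_cons_self
    exact (congrArg (applySeq n (natSeq n L)) (simpleRefl_comp_compNo h1 h2 g)).trans
      (ih (fun k hk => hL k (List.mem_cons_of_mem _ hk)) _)

end CompNo

theorem applySeqNat_range' {n p k : ℕ} (hp : 1 ≤ p) (hpk : p + k ≤ n + 1) (hk : k < n)
    (g : ℕ → ℤ) :
    applySeqNat n (List.range' p k) g = fun j =>
      if p ≤ j ∧ j < p + k then g (cycSucc n j) + g (cycPred n p) - g p else g j := by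
  induction k with
  | zero => funext j; simp [applySeqNat]
  | succ k ih =>
    rw [List.range'_concat, applySeqNat_append, ih (by omega) (by omega)]
    funext j
    simp only [applySeqNat, List.foldl, simpleReflNat, Function.update_apply, cycPred, cycSucc]
    grind

theorem applySeqNat_range'_reverse {n p k : ℕ} (hp : 1 ≤ p) (hpk : p + k ≤ n + 1) (hk : k < n)
    (g : ℕ → ℤ) :
    applySeqNat n (List.range' p k).reverse g = fun j =>
      if p ≤ j ∧ j < p + k then g (cycPred n j) + g (cycSucc n (p + k - 1)) - g (p + k - 1)
      else g j := by
  induction k generalizing p with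
  | zero => funext j; simp [applySeqNat]
  | succ k ih =>
    rw [List.range'_succ, List.reverse_cons, applySeqNat_append,
      ih (by omega) (by omega) (by omega)]
    funext j
    simp only [applySeqNat, List.foldl, simpleReflNat, Function.update_apply, cycPred, cycSucc]
    grind

/-- `s_p, …, s_q, s_{q-1}, …, s_p`: a word for the reflection in the real root
`α_p + ⋯ + α_q`. -/
def rootWord (p q : ℕ) : List ℕ := List.range' p (q + 1 - p) ++ (List.range' p (q - p)).reverse

theorem le_and_le_of_mem_rootWord {p q k : ℕ} (h : k ∈ rootWord p q) : p ≤ k ∧ k ≤ q := by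
  simp only [rootWord, List.mem_append, List.mem_reverse, List.mem_range'_1] at h
  omega

theorem applySeqNat_rootWord {n p q : ℕ} (hp : 1 ≤ p) (hpq : p ≤ q) (hqn : q ≤ n)
    (hcirc : q + 1 < p + n) (g : ℕ → ℤ) :
    applySeqNat n (rootWord p q) g = fun j =>
      if p ≤ j ∧ j ≤ q then g j - (g p + g q - g (cycPred n p) - g (cycSucc n q)) else g j := by
  rw [rootWord, applySeqNat_append, applySeqNat_range' hp (by omega) (by omega),
    applySeqNat_range'_reverse hp (by omega) (by omega)]
  funext j
  simp only [cycPred, cycSucc]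
  grind

theorem blockW2_eq_rootWord_append (n d : ℕ) :
    blockW2 n d = rootWord 1 d ++ rootWord (d + 1) n := by
  simp only [blockW2, rootWord, List.append_assoc, Nat.add_sub_cancel, Nat.add_sub_add_right,
    Nat.sub_sub, Nat.add_comm 1]

theorem one_le_and_le_of_mem_blockW2 {n d k : ℕ} (hd : d ≤ n) (h : k ∈ blockW2 n d) :
    1 ≤ k ∧ k ≤ n := by
  rw [blockW2_eq_rootWord_append, List.mem_append] at h
  rcases h with h | h <;> have := le_and_le_of_mem_rootWord h <;> omega

def blockFun (x y z : ℤ) (a b : ℕ) : ℕ → ℤ :=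
  fun k => if k ≤ a then x else if k ≤ a + b then y else z

theorem statement11_general (n : ℕ) (a b c m : ℕ)
    (ha : 1 ≤ a) (hb : 1 ≤ b) (hc : 1 ≤ c) (habc : a + b + c = n) :
    applySeq n (natSeq n (blockW2 n (a + b)))
        (blockVec n ((m : ℤ) + 1) (m : ℤ) ((m : ℤ) + 1) a b) =
      blockVec n ((m : ℤ) + 2) ((m : ℤ) + 1) ((m : ℤ) + 2) a b := by
  have : NeZero n := ⟨by omega⟩
  set v := blockFun ((m : ℤ) + 1) m ((m : ℤ) + 1) a b
  have first : applySeqNat n (rootWord 1 (a + b)) v =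
      fun j => if 1 ≤ j ∧ j ≤ a + b then v j + 1 else v j := by
    rw [applySeqNat_rootWord le_rfl (by omega) (by omega) (by omega)]
    funext j
    simp only [v, blockFun, cycPred, cycSucc]
    grind
  have second : applySeqNat n (rootWord (a + b + 1) n)
      (fun j => if 1 ≤ j ∧ j ≤ a + b then v j + 1 else v j) =
      fun j => if 1 ≤ j ∧ j ≤ n then v j + 1 else v j := by
    rw [applySeqNat_rootWord (by omega) (by omega) le_rfl (by omega)]
    funext j
    simp only [v, blockFun, cycPred, cycSucc]
    grind
  change applySeq n _ (v ∘ compNo) = _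
  rw [applySeq_natSeq_comp_compNo _ fun k => one_le_and_le_of_mem_blockW2 (by omega),
    blockW2_eq_rootWord_append, applySeqNat_append, first, second]
  funext j
  obtain ⟨hj1, hjn⟩ := compNo_mem_Icc j
  simp only [Function.comp_apply, v, blockFun, blockVec]
  grind

theorem statement11 (n : ℕ) (hn : 3 ≤ n) (a b c m : ℕ)
    (ha : 1 ≤ a) (hb : 1 ≤ b) (hc : 1 ≤ c) (habc : a + b + c = n) :
    applySeq n (natSeq n (blockW2 n (a + b)))
        (blockVec n ((m : ℤ) + 1) (m : ℤ) ((m : ℤ) + 1) a b) =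
      blockVec n ((m : ℤ) + 2) ((m : ℤ) + 1) ((m : ℤ) + 2) a b :=
  statement11_general n a b c m ha hb hc habc
end

section
/- Let n ≥ 3. A vector α ∈ ℤⁿ is a positive real root of type Ã_{n−1} if and only if there exist nonnegative integers m, a, b, c with a + b + c = n, a + c ≠ 0 and a + c ≠ n, such that α = (m^a, (m+1)^b, m^c) or α = ((m+1)^a, m^b, (m+1)^c). -/
lemma subval {n : ℕ} (hn : 0 < n) (x : ZMod n) (l : ℕ) (hl : l ≤ n) :
    (x - (l : ZMod n)).val = if x.val < l then x.val + n - l else x.val - l := by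
  haveI : NeZero n := ⟨hn.ne'⟩
  have h0 : ((n - l : ℕ) : ZMod n) = -(l : ZMod n) := by
    apply eq_neg_of_add_eq_zero_left
    rw [← Nat.cast_add, Nat.sub_add_cancel hl, ZMod.natCast_self]
  have h1 : x - (l : ZMod n) = x + ((n - l : ℕ) : ZMod n) := by rw [h0, sub_eq_add_neg]
  have hx := ZMod.val_lt x
  rw [h1, ZMod.val_add, ZMod.val_natCast]
  by_cases hl0 : l = 0
  · subst hl0
    simp [Nat.mod_self, Nat.mod_eq_of_lt hx]
  rcases Nat.eq_or_lt_of_le hl with h | h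
  · subst h
    rw [Nat.sub_self, Nat.zero_mod, Nat.add_zero, Nat.mod_eq_of_lt hx, if_pos hx]
    omega
  · rw [Nat.mod_eq_of_lt (by omega : n - l < n)]
    split_ifs with h2
    · rw [Nat.mod_eq_of_lt (by omega)]; omega
    · have h3 : x.val + (n - l) = (x.val - l) + n := by omega
      rw [h3, Nat.add_mod_right, Nat.mod_eq_of_lt (by omega)]

lemma addval {n : ℕ} (hn : 0 < n) (x : ZMod n) (l : ℕ) (hl : l ≤ n) :
    (x + (l : ZMod n)).val = if x.val + l < n then x.val + l else x.val + l - n := by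
  haveI : NeZero n := ⟨hn.ne'⟩
  have hx := ZMod.val_lt x
  rw [ZMod.val_add, ZMod.val_natCast]
  rcases Nat.eq_or_lt_of_le hl with h | h
  · subst h
    rw [Nat.mod_self, Nat.add_zero, Nat.mod_eq_of_lt hx]
    split_ifs <;> omega
  · rw [Nat.mod_eq_of_lt h]
    split_ifs with h2
    · rw [Nat.mod_eq_of_lt (by omega)]
    · have h3 : x.val + l = (x.val + l - n) + n := by omega
      conv_lhs => rw [h3]
      rw [Nat.add_mod_right, Nat.mod_eq_of_lt (by omega)]


def InC (n : ℕ) (v : ZMod n → ℤ) : Prop :=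
  ∃ (m : ℤ) (p : ZMod n) (l : ℕ), 0 < l ∧ l < n ∧
    ∀ j, v j = m + if (j - p).val < l then 1 else 0

lemma InC_simpleRefl {n : ℕ} (hn : 3 ≤ n) (i : ZMod n) {v : ZMod n → ℤ}
    (h : InC n v) : InC n (simpleRefl n i v) := by
  have hn0 : 0 < n := by omega
  haveI : NeZero n := ⟨by omega⟩
  obtain ⟨m, p, l, hl0, hln, hv⟩ := h
  have htn : (i - p).val < n := ZMod.val_lt _
  have hvA : v (i - 1) = m + if (if (i - p).val < 1 then (i - p).val + n - 1
      else (i - p).val - 1) < l then 1 else 0 := by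
    rw [hv (i - 1), show i - 1 - p = (i - p) - ((1 : ℕ) : ZMod n) by push_cast; ring,
      subval hn0 _ 1 (by omega)]
  have hvC : v (i + 1) = m + if (if (i - p).val + 1 < n then (i - p).val + 1
      else (i - p).val + 1 - n) < l then 1 else 0 := by
    rw [hv (i + 1), show i + 1 - p = (i - p) + ((1 : ℕ) : ZMod n) by push_cast; ring,
      addval hn0 _ 1 (by omega)]
  have hvB : v i = m + if (i - p).val < l then 1 else 0 := hv i
  have hSubI : (i - (p + 1)).val = if (i - p).val < 1 then (i - p).val + n - 1
      else (i - p).val - 1 := by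
    rw [show i - (p + 1) = (i - p) - ((1 : ℕ) : ZMod n) by push_cast; ring,
      subval hn0 _ 1 (by omega)]
  have hAddI : (i - (p - 1)).val = if (i - p).val + 1 < n then (i - p).val + 1
      else (i - p).val + 1 - n := by
    rw [show i - (p - 1) = (i - p) + ((1 : ℕ) : ZMod n) by push_cast; ring,
      addval hn0 _ 1 (by omega)]
  have hu : ∀ j : ZMod n, j ≠ i → (j - p).val ≠ (i - p).val := by
    intro j hj hval
    exact hj (sub_left_inj.mp (ZMod.val_injective n hval))
  -- case analysis
  rcases Nat.lt_or_ge (i - p).val l with hB | hB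
  · rcases Nat.eq_zero_or_pos (i - p).val with h0 | h0
    · rcases Nat.lt_or_ge l 2 with hl2 | hl2
      · -- t = 0, l = 1 : new (m-1, p+1, n-1)
        refine ⟨m - 1, p + 1, n - 1, by omega, by omega, fun j => ?_⟩
        simp only [simpleRefl]
        by_cases hj : j = i
        · subst hj
          rw [if_pos rfl, hvA, hvC, hvB, hSubI]
          split_ifs <;> omega
        · rw [if_neg hj, hv j]
          have hju := hu j hj
          have hjn := ZMod.val_lt (j - p)
          have hR : (j - (p + 1)).val = if (j - p).val < 1 then (j - p).val + n - 1
              else (j - p).val - 1 := by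
            rw [show j - (p + 1) = (j - p) - ((1 : ℕ) : ZMod n) by push_cast; ring,
              subval hn0 _ 1 (by omega)]
          rw [hR]
          split_ifs <;> omega
      · -- t = 0, l ≥ 2 : new (m, p+1, l-1)
        refine ⟨m, p + 1, l - 1, by omega, by omega, fun j => ?_⟩
        simp only [simpleRefl]
        by_cases hj : j = i
        · subst hj
          rw [if_pos rfl, hvA, hvC, hvB, hSubI]
          split_ifs <;> omega
        · rw [if_neg hj, hv j]
          have hju := hu j hj
          have hjn := ZMod.val_lt (j - p)
          have hR : (j - (p + 1)).val = if (j - p).val < 1 then (j - p).val + n - 1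
              else (j - p).val - 1 := by
            rw [show j - (p + 1) = (j - p) - ((1 : ℕ) : ZMod n) by push_cast; ring,
              subval hn0 _ 1 (by omega)]
          rw [hR]
          split_ifs <;> omega
    · rcases Nat.lt_or_ge ((i - p).val + 1) l with h2 | h2
      · -- interior: unchanged
        refine ⟨m, p, l, hl0, hln, fun j => ?_⟩
        simp only [simpleRefl]
        by_cases hj : j = i
        · subst hj
          rw [if_pos rfl, hvA, hvC, hvB]
          split_ifs <;> omega
        · rw [if_neg hj, hv j]
      · -- right endpoint: new (m, p, l-1)
        refine ⟨m, p, l - 1, by omega, by omega, fun j => ?_⟩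
        simp only [simpleRefl]
        by_cases hj : j = i
        · subst hj
          rw [if_pos rfl, hvA, hvC, hvB]
          split_ifs <;> omega
        · rw [if_neg hj, hv j]
          have hju := hu j hj
          have hjn := ZMod.val_lt (j - p)
          split_ifs <;> omega
  · rcases Nat.eq_or_lt_of_le hB with hE | hE
    · rcases Nat.lt_or_ge l (n - 1) with h2 | h2
      · -- t = l ≤ n-2 : extend right: new (m, p, l+1)
        refine ⟨m, p, l + 1, by omega, by omega, fun j => ?_⟩
        simp only [simpleRefl]
        by_cases hj : j = i
        · subst hj
          rw [if_pos rfl, hvA, hvC, hvB]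
          split_ifs <;> omega
        · rw [if_neg hj, hv j]
          have hju := hu j hj
          have hjn := ZMod.val_lt (j - p)
          split_ifs <;> omega
      · -- t = l = n-1 : complement singleton: new (m+1, i, 1)
        refine ⟨m + 1, i, 1, by omega, by omega, fun j => ?_⟩
        simp only [simpleRefl]
        by_cases hj : j = i
        · subst hj
          rw [if_pos rfl, hvA, hvC, hvB, sub_self, ZMod.val_zero]
          split_ifs <;> omega
        · rw [if_neg hj, hv j]
          have hju := hu j hj
          have hjn := ZMod.val_lt (j - p)
          have hR : (j - i).val ≠ 0 := by
            intro h0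
            exact hj (sub_eq_zero.mp ((ZMod.val_eq_zero _).mp h0))
          split_ifs <;> omega
    · rcases Nat.lt_or_ge (i - p).val (n - 1) with h2 | h2
      · -- t > l, t < n-1 : unchanged
        refine ⟨m, p, l, hl0, hln, fun j => ?_⟩
        simp only [simpleRefl]
        by_cases hj : j = i
        · subst hj
          rw [if_pos rfl, hvA, hvC, hvB]
          split_ifs <;> omega
        · rw [if_neg hj, hv j]
      · -- t = n-1 : extend left: new (m, p-1, l+1)
        refine ⟨m, p - 1, l + 1, by omega, by omega, fun j => ?_⟩
        simp only [simpleRefl]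
        by_cases hj : j = i
        · subst hj
          rw [if_pos rfl, hvA, hvC, hvB, hAddI]
          split_ifs <;> omega
        · rw [if_neg hj, hv j]
          have hju := hu j hj
          have hjn := ZMod.val_lt (j - p)
          have hR : (j - (p - 1)).val = if (j - p).val + 1 < n then (j - p).val + 1
              else (j - p).val + 1 - n := by
            rw [show j - (p - 1) = (j - p) + ((1 : ℕ) : ZMod n) by push_cast; ring,
              addval hn0 _ 1 (by omega)]
          rw [hR]
          split_ifs <;> omega

lemma realroot_step {n : ℕ} (i : ZMod n) {w : ZMod n → ℤ} (h : IsRealRoot n w) :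
    IsRealRoot n (simpleRefl n i w) := by
  obtain ⟨L, k, rfl⟩ := h
  exact ⟨L ++ [i], k, by rw [applySeq, applySeq, List.foldl_append]; rfl⟩

lemma stdRoot_vOf {n : ℕ} (hn : 3 ≤ n) (p : ZMod n) :
    (fun j : ZMod n => (0 : ℤ) + if (j - p).val < 1 then 1 else 0) = stdRoot n p := by
  haveI : NeZero n := ⟨by omega⟩
  funext j
  simp only [stdRoot, zero_add]
  by_cases hj : j = p
  · subst hj
    rw [if_pos rfl, sub_self, ZMod.val_zero, if_pos (by omega)]
  · rw [if_neg hj, if_neg ?_]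
    intro h0
    have : (j - p).val = 0 := by omega
    exact hj (sub_eq_zero.mp ((ZMod.val_eq_zero _).mp this))

lemma vOf_real {n : ℕ} (hn : 3 ≤ n) : ∀ (K : ℕ) (m : ℤ) (p : ZMod n) (l : ℕ),
    0 < l → l < n → (m * n + l).natAbs ≤ K →
    IsRealRoot n (fun j => m + if (j - p).val < l then 1 else 0) := by
  have hn0 : 0 < n := by omega
  haveI : NeZero n := ⟨by omega⟩
  intro K
  induction K with
  | zero =>
    intro m p l hl0 hln hw
    exfalso
    rcases le_or_gt 0 m with hm | hm
    · have : 0 ≤ m * n := mul_nonneg hm (by positivity)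
      omega
    · have : m * n ≤ -n := by nlinarith [hm]
      omega
  | succ K ih =>
    intro m p l hl0 hln hw
    rcases le_or_gt 0 m with hm | hm
    · -- m ≥ 0
      have hmn : 0 ≤ m * n := mul_nonneg hm (by positivity)
      rcases Nat.lt_or_ge l 2 with hl2 | hl2
      · -- l = 1
        rcases eq_or_lt_of_le hm with hm0 | hm1
        · -- m = 0 : base case
          have hl1 : l = 1 := by omega
          subst hl1
          rw [← hm0, stdRoot_vOf hn]
          exact ⟨[], p, rfl⟩
        · -- m ≥ 1 : reduce to (m-1, p+1, n-1)
          have hmn2 : (n : ℤ) ≤ m * n := le_mul_of_one_le_left (by positivity) (by omega)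
          have claim : (fun j : ZMod n => m + if (j - p).val < l then 1 else 0)
              = simpleRefl n p (fun j => (m - 1) + if (j - (p + 1)).val < n - 1 then 1 else 0) := by
            funext j
            simp only [simpleRefl]
            by_cases hj : j = p
            · rw [hj, if_pos rfl,
                show p - 1 - (p + 1) = (0 : ZMod n) - ((2 : ℕ) : ZMod n) by push_cast; ring,
                show p + 1 - (p + 1) = (0 : ZMod n) by ring,
                show p - (p + 1) = (0 : ZMod n) - ((1 : ℕ) : ZMod n) by push_cast; ring,
                subval hn0 _ 2 (by omega), subval hn0 _ 1 (by omega),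
                ZMod.val_zero, sub_self, ZMod.val_zero]
              split_ifs <;> omega
            · rw [if_neg hj]
              have hju : (j - p).val ≠ 0 := by
                intro h0
                exact hj (sub_eq_zero.mp ((ZMod.val_eq_zero _).mp h0))
              have hjn := ZMod.val_lt (j - p)
              rw [show j - (p + 1) = (j - p) - ((1 : ℕ) : ZMod n) by push_cast; ring,
                subval hn0 _ 1 (by omega)]
              split_ifs <;> omega
          rw [claim]
          refine realroot_step p (ih (m - 1) (p + 1) (n - 1) (by omega) (by omega) ?_)
          have : (m - 1) * n = m * n - n := by ring
          rw [this]
          omega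
      · -- l ≥ 2 : reduce to (m, p+1, l-1)
        have claim : (fun j : ZMod n => m + if (j - p).val < l then 1 else 0)
            = simpleRefl n p (fun j => m + if (j - (p + 1)).val < l - 1 then 1 else 0) := by
          funext j
          simp only [simpleRefl]
          by_cases hj : j = p
          · rw [hj, if_pos rfl,
              show p - 1 - (p + 1) = (0 : ZMod n) - ((2 : ℕ) : ZMod n) by push_cast; ring,
              show p + 1 - (p + 1) = (0 : ZMod n) by ring,
              show p - (p + 1) = (0 : ZMod n) - ((1 : ℕ) : ZMod n) by push_cast; ring,
              subval hn0 _ 2 (by omega), subval hn0 _ 1 (by omega),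
              ZMod.val_zero, sub_self, ZMod.val_zero]
            split_ifs <;> omega
          · rw [if_neg hj]
            have hju : (j - p).val ≠ 0 := by
              intro h0
              exact hj (sub_eq_zero.mp ((ZMod.val_eq_zero _).mp h0))
            have hjn := ZMod.val_lt (j - p)
            rw [show j - (p + 1) = (j - p) - ((1 : ℕ) : ZMod n) by push_cast; ring,
              subval hn0 _ 1 (by omega)]
            split_ifs <;> omega
        rw [claim]
        exact realroot_step p (ih m (p + 1) (l - 1) (by omega) (by omega) (by omega))
    · -- m < 0
      have hmn : m * n ≤ -n := by nlinarith [hm]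
      rcases Nat.lt_or_ge l (n - 1) with hl2 | hl2
      · -- l ≤ n-2 : reduce to (m, p, l+1), reflecting at q = p + l
        have claim : (fun j : ZMod n => m + if (j - p).val < l then 1 else 0)
            = simpleRefl n (p + (l : ZMod n))
              (fun j => m + if (j - p).val < l + 1 then 1 else 0) := by
          funext j
          simp only [simpleRefl]
          by_cases hj : j = p + (l : ZMod n)
          · subst hj
            rw [if_pos rfl,
              show p + (l : ZMod n) - 1 - p = ((l : ℕ) : ZMod n) - ((1 : ℕ) : ZMod n)
                by push_cast; ring,
              show p + (l : ZMod n) + 1 - p = ((l : ℕ) : ZMod n) + ((1 : ℕ) : ZMod n)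
                by push_cast; ring,
              show p + (l : ZMod n) - p = ((l : ℕ) : ZMod n) by ring,
              subval hn0 _ 1 (by omega), addval hn0 _ 1 (by omega),
              ZMod.val_natCast, Nat.mod_eq_of_lt hln]
            split_ifs <;> omega
          · rw [if_neg hj]
            have hju : (j - p).val ≠ l := by
              intro h0
              apply hj
              have : j - p = ((l : ℕ) : ZMod n) := by
                have := ZMod.natCast_rightInverse (j - p)
                rw [← this, h0]
              rw [← this]; ring
            have hjn := ZMod.val_lt (j - p)
            split_ifs <;> omega
        rw [claim]
        refine realroot_step _ (ih m p (l + 1) (by omega) (by omega) (by omega))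
      · -- l = n-1 : reduce to (m+1, p-1, 1), reflecting at q = p - 1
        have hl3 : l = n - 1 := by omega
        have claim : (fun j : ZMod n => m + if (j - p).val < l then 1 else 0)
            = simpleRefl n (p - 1)
              (fun j => (m + 1) + if (j - (p - 1)).val < 1 then 1 else 0) := by
          funext j
          simp only [simpleRefl]
          by_cases hj : j = p - 1
          · subst hj
            rw [if_pos rfl,
              show p - 1 - 1 - (p - 1) = (0 : ZMod n) - ((1 : ℕ) : ZMod n) by push_cast; ring,
              show p - 1 + 1 - (p - 1) = (0 : ZMod n) + ((1 : ℕ) : ZMod n) by push_cast; ring,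
              show p - 1 - (p - 1) = (0 : ZMod n) by ring,
              show p - 1 - p = (0 : ZMod n) - ((1 : ℕ) : ZMod n) by push_cast; ring,
              subval hn0 _ 1 (by omega), addval hn0 _ 1 (by omega),
              ZMod.val_zero]
            split_ifs <;> omega
          · rw [if_neg hj]
            have hju : (j - p).val ≠ n - 1 := by
              intro h0
              apply hj
              have h1 : (p - 1 - p).val = n - 1 := by
                rw [show p - 1 - p = (0 : ZMod n) - ((1 : ℕ) : ZMod n) by push_cast; ring,
                  subval hn0 _ 1 (by omega), ZMod.val_zero]
                split_ifs <;> omega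
              have := ZMod.val_injective n (h0.trans h1.symm)
              exact sub_left_inj.mp this
            have hjn := ZMod.val_lt (j - p)
            have hR : (j - (p - 1)).val ≠ 0 := by
              intro h0
              exact hj (sub_eq_zero.mp ((ZMod.val_eq_zero _).mp h0))
            split_ifs <;> omega
        rw [claim]
        rcases eq_or_lt_of_le (by omega : m ≤ -1) with hm1 | hm2
        · -- m = -1 : base after one reflection
          have : m + 1 = 0 := by omega
          rw [this, stdRoot_vOf hn]
          exact realroot_step _ ⟨[], p - 1, rfl⟩
        · refine realroot_step _ (ih (m + 1) (p - 1) 1 (by omega) (by omega) ?_)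
          have hmn2 : m * n ≤ -2 * n := by nlinarith
          have h4 : (m + 1) * (n : ℤ) = m * n + n := by ring
          rw [h4]
          omega

lemma stdRoot_InC {n : ℕ} (hn : 3 ≤ n) (k : ZMod n) : InC n (stdRoot n k) :=
  ⟨0, k, 1, by omega, by omega, fun j => by rw [← stdRoot_vOf hn]⟩

lemma applySeq_InC {n : ℕ} (hn : 3 ≤ n) (L : List (ZMod n)) :
    ∀ v, InC n v → InC n (applySeq n L v) := by
  induction L with
  | nil => intro v h; exact h
  | cons i L ih =>
    intro v h
    exact ih _ (InC_simpleRefl hn i h)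

lemma InC_isRealRoot {n : ℕ} (hn : 3 ≤ n) {v : ZMod n → ℤ} (h : InC n v) :
    IsRealRoot n v := by
  obtain ⟨m, p, l, hl0, hln, hv⟩ := h
  have : v = fun j => m + if (j - p).val < l then 1 else 0 := funext hv
  rw [this]
  exact vOf_real hn (m * n + l).natAbs m p l hl0 hln le_rfl

lemma blockVec_eq {n : ℕ} (x y : ℤ) (a b : ℕ) (j : ZMod n) :
    blockVec n x y x a b j = if a + 1 ≤ compNo j ∧ compNo j ≤ a + b then y else x := by
  unfold blockVec
  by_cases h1 : compNo j ≤ a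
  · rw [if_pos h1, if_neg (by omega)]
  · rw [if_neg h1]
    by_cases h2 : compNo j ≤ a + b
    · rw [if_pos h2, if_pos ⟨by omega, h2⟩]
    · rw [if_neg h2, if_neg (by omega)]

lemma mem_iff_compNo {n : ℕ} (hn : 3 ≤ n) (a b : ℕ) (hab : a + b ≤ n) (hb : 1 ≤ b)
    (j : ZMod n) :
    (j - ((a + 1 : ℕ) : ZMod n)).val < b ↔ a + 1 ≤ compNo j ∧ compNo j ≤ a + b := by
  haveI : NeZero n := ⟨by omega⟩
  rw [subval (by omega) j (a + 1) (by omega)]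
  unfold compNo
  have := ZMod.val_lt j
  split_ifs <;> omega

lemma mem_compl {n : ℕ} (hn : 0 < n) (x : ZMod n) (l : ℕ) (hl : l ≤ n) :
    ¬(x.val < l) ↔ (x - (l : ZMod n)).val < n - l := by
  haveI : NeZero n := ⟨hn.ne'⟩
  rw [subval hn x l hl]
  have := ZMod.val_lt x
  split_ifs <;> omega

theorem statement16 (n : ℕ) (hn : 3 ≤ n) (v : ZMod n → ℤ) :
    (IsRealRoot n v ∧ ∀ j, 0 ≤ v j) ↔
      ∃ m a b c : ℕ, a + b + c = n ∧ a + c ≠ 0 ∧ a + c ≠ n ∧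
        (v = blockVec n (m : ℤ) ((m : ℤ) + 1) (m : ℤ) a b ∨
         v = blockVec n ((m : ℤ) + 1) (m : ℤ) ((m : ℤ) + 1) a b) := by
  haveI : NeZero n := ⟨by omega⟩
  constructor
  · rintro ⟨⟨L, k, hvL⟩, hpos⟩
    have hC : InC n v := by
      rw [hvL]; exact applySeq_InC hn L _ (stdRoot_InC hn k)
    obtain ⟨m, p, l, hl0, hln, hv⟩ := hC
    have hpv := ZMod.val_lt p
    -- m is nonnegative
    have hj0 : (p + ((l : ℕ) : ZMod n) - p).val = l := by
      rw [show p + ((l : ℕ) : ZMod n) - p = ((l : ℕ) : ZMod n) by ring,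
        ZMod.val_natCast, Nat.mod_eq_of_lt hln]
    have hm0 : 0 ≤ m := by
      have h := hpos (p + ((l : ℕ) : ZMod n))
      rw [hv _, hj0, if_neg (by omega)] at h
      omega
    obtain ⟨M, hM⟩ : ∃ M : ℕ, m = (M : ℤ) := ⟨m.toNat, (Int.toNat_of_nonneg hm0).symm⟩
    subst hM
    by_cases hcase : 1 ≤ p.val ∧ p.val + l ≤ n + 1
    · refine ⟨M, p.val - 1, l, n - (p.val - 1) - l, by omega, by omega, by omega, Or.inl ?_⟩
      funext j
      have hcast : (((p.val - 1) + 1 : ℕ) : ZMod n) = p := by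
        rw [show (p.val - 1) + 1 = p.val by omega]
        exact ZMod.natCast_rightInverse p
      have hiff := mem_iff_compNo hn (p.val - 1) l (by omega) (by omega) j
      rw [hcast] at hiff
      rw [hv j, blockVec_eq]
      by_cases hmem : (j - p).val < l
      · rw [if_pos hmem, if_pos (hiff.mp hmem)]
      · rw [if_neg hmem, if_neg (fun hc => hmem (hiff.mpr hc)), add_zero]
    · set q := p + ((l : ℕ) : ZMod n) with hqdef
      have hq : q.val = if p.val + l < n then p.val + l else p.val + l - n :=
        addval (by omega) p l (by omega)
      have hq1 : 1 ≤ q.val := by rw [hq]; split_ifs <;> omega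
      have hq2 : q.val - 1 + (n - l) ≤ n := by rw [hq]; split_ifs <;> omega
      refine ⟨M, q.val - 1, n - l, n - (q.val - 1) - (n - l), by omega, by omega, by omega,
        Or.inr ?_⟩
      funext j
      have hcast : (((q.val - 1) + 1 : ℕ) : ZMod n) = q := by
        rw [show (q.val - 1) + 1 = q.val by omega]
        exact ZMod.natCast_rightInverse q
      have hiff := mem_iff_compNo hn (q.val - 1) (n - l) (by omega) (by omega) j
      rw [hcast] at hiff
      have hcomp := mem_compl (by omega : 0 < n) (j - p) l (by omega)
      have he : j - p - ((l : ℕ) : ZMod n) = j - q := by rw [hqdef]; ring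
      rw [he] at hcomp
      rw [hv j, blockVec_eq]
      by_cases hmem : (j - p).val < l
      · rw [if_pos hmem, if_neg (fun hc => (hcomp.mpr (hiff.mpr hc)) hmem)]
      · rw [if_neg hmem, if_pos (hiff.mp (hcomp.mp hmem)), add_zero]
  · rintro ⟨M, a, b, c, habc, h1, h2, hform | hform⟩
    · have hC : InC n v := by
        refine ⟨M, ((a + 1 : ℕ) : ZMod n), b, by omega, by omega, fun j => ?_⟩
        rw [hform, blockVec_eq]
        have hiff := mem_iff_compNo hn a b (by omega) (by omega) j
        by_cases hmem : (j - ((a + 1 : ℕ) : ZMod n)).val < b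
        · rw [if_pos hmem, if_pos (hiff.mp hmem)]
        · rw [if_neg hmem, if_neg (fun hc => hmem (hiff.mpr hc)), add_zero]
      refine ⟨InC_isRealRoot hn hC, fun j => ?_⟩
      rw [hform]
      unfold blockVec
      split_ifs <;> positivity
    · have hC : InC n v := by
        refine ⟨M, ((a + b + 1 : ℕ) : ZMod n), a + c, by omega, by omega, fun j => ?_⟩
        rw [hform, blockVec_eq]
        have hiff := mem_iff_compNo hn a b (by omega) (by omega) j
        have hcomp := mem_compl (by omega : 0 < n) (j - ((a + 1 : ℕ) : ZMod n)) b (by omega)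
        have he : j - ((a + 1 : ℕ) : ZMod n) - ((b : ℕ) : ZMod n)
            = j - ((a + b + 1 : ℕ) : ZMod n) := by push_cast; ring
        rw [he, show n - b = a + c by omega] at hcomp
        by_cases hP : a + 1 ≤ compNo j ∧ compNo j ≤ a + b
        · rw [if_pos hP, if_neg (fun hc => (hcomp.mpr hc) (hiff.mpr hP)), add_zero]
        · rw [if_neg hP, if_pos (hcomp.mp (fun hmem => hP (hiff.mp hmem)))]
      refine ⟨InC_isRealRoot hn hC, fun j => ?_⟩
      rw [hform]
      unfold blockVec
      split_ifs <;> positivity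
end
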